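/- arXiv:math/0312330 — 6 statements merged into one kernel-verified Lean document; each statement's English description precedes it below -/
import Mathlib

section
/- Let H = {H_α}_{α∈π} be a Hopf π-coalgebra over a field k, i.e., a family of k-algebras with algebra maps Δ_{α,β}: H_{αβ} → H_α ⊗ H_β, counit ε: H_1 → k, and antipode maps S_α: H_α → H_{α⁻¹} satisfying the Hopf π-coalgebra axioms. Then the set {α ∈ π | H_α ≠ 0} is a subgroup of π. -/
open TensorProduct

/-- Transport along an equality of indices, as a `k`-linear map. -/
def castL (k : Type) [Field k] {π : Type} (H : π → Type) [∀ α, Ring (H α)]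
    [∀ α, Algebra k (H α)] {α β : π} (h : α = β) : H α →ₗ[k] H β :=
  h ▸ (LinearMap.id : H α →ₗ[k] H α)

/-- A Hopf `π`-coalgebra over a field `k`: a family of `k`-algebras `H α` with algebra maps
`Δ_{α,β} : H (α*β) → H α ⊗ H β`, a counit `ε : H 1 → k`, and antipodes `S_α : H α → H α⁻¹`,
subject to coassociativity, the counit axioms and the antipode axioms. -/
structure HopfGrpCoalg (k : Type) [Field k] (π : Type) [Group π] (H : π → Type)
    [∀ α, Ring (H α)] [∀ α, Algebra k (H α)] where
  comul : ∀ α β : π, H (α * β) →ₐ[k] H α ⊗[k] H β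
  counit : H 1 →ₐ[k] k
  antipode : ∀ α : π, H α →ₗ[k] H α⁻¹
  coassoc : ∀ (α β γ : π) (x : H (α * β * γ)),
    (TensorProduct.assoc k (H α) (H β) (H γ))
      (TensorProduct.map (comul α β).toLinearMap LinearMap.id ((comul (α * β) γ) x))
    = TensorProduct.map LinearMap.id (comul β γ).toLinearMap
        ((comul α (β * γ)) (castL k H (mul_assoc α β γ) x))
  counit_right : ∀ (α : π) (x : H (α * 1)),
    (TensorProduct.rid k (H α))
      ((LinearMap.lTensor (H α) counit.toLinearMap) ((comul α 1) x)) = castL k H (mul_one α) x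
  counit_left : ∀ (α : π) (x : H (1 * α)),
    (TensorProduct.lid k (H α))
      ((LinearMap.rTensor (H α) counit.toLinearMap) ((comul 1 α) x)) = castL k H (one_mul α) x
  antipode_mul : ∀ (α : π) (x : H 1),
    (LinearMap.mul' k (H α))
      (TensorProduct.map (castL k H (inv_inv α) ∘ₗ antipode α⁻¹) LinearMap.id
        ((comul α⁻¹ α) (castL k H (inv_mul_cancel α).symm x)))
    = counit x • 1
  mul_antipode : ∀ (α : π) (x : H 1),
    (LinearMap.mul' k (H α))
      (TensorProduct.map LinearMap.id (castL k H (inv_inv α) ∘ₗ antipode α⁻¹)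
        ((comul α α⁻¹) (castL k H (mul_inv_cancel α).symm x)))
    = counit x • 1

namespace HopfGrpCoalg

variable {k : Type} [Field k] {π : Type} [Group π] {H : π → Type}
  [∀ α, Ring (H α)] [∀ α, Algebra k (H α)]

theorem nontrivial_one (Hc : HopfGrpCoalg k π H) : Nontrivial (H 1) :=
  Hc.counit.toRingHom.domain_nontrivial

theorem nontrivial_mul (Hc : HopfGrpCoalg k π H) {α β : π} [Nontrivial (H α)]
    [Nontrivial (H β)] : Nontrivial (H (α * β)) :=
  have : Nontrivial (H α ⊗[k] H β) :=
    Algebra.TensorProduct.nontrivial_of_algebraMap_injective_of_flat_left k _ _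
      (algebraMap k (H β)).injective
  (Hc.comul α β).toRingHom.domain_nontrivial

/-- If `H α⁻¹ = 0` then `H α⁻¹ ⊗ H α = 0`, so the left-hand side of the antipode axiom for `1`
vanishes while its right-hand side is `ε 1 • 1 = 1`. -/
theorem nontrivial_inv (Hc : HopfGrpCoalg k π H) {α : π} [Nontrivial (H α)] :
    Nontrivial (H α⁻¹) := by
  by_contra htriv
  have : Subsingleton (H α⁻¹) := not_nontrivial_iff_subsingleton.mp htriv
  have h := Hc.antipode_mul α 1
  rw [Subsingleton.elim ((Hc.comul α⁻¹ α) _) 0, map_zero, map_zero, map_one, one_smul] at h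
  exact zero_ne_one h

def support (Hc : HopfGrpCoalg k π H) : Subgroup π where
  carrier := {α | Nontrivial (H α)}
  one_mem' := Hc.nontrivial_one
  mul_mem' {α β} (_ : Nontrivial (H α)) (_ : Nontrivial (H β)) := Hc.nontrivial_mul
  inv_mem' {α} (_ : Nontrivial (H α)) := Hc.nontrivial_inv

end HopfGrpCoalg

/-- For a Hopf `π`-coalgebra `H`, the set `{α ∈ π | H α ≠ 0}` is a subgroup of `π`. -/
theorem support_is_subgroup (k : Type) [Field k] (π : Type) [Group π] (H : π → Type)
    [∀ α, Ring (H α)] [∀ α, Algebra k (H α)] (Hc : HopfGrpCoalg k π H) :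
    ∃ G : Subgroup π, (G : Set π) = {α : π | ∃ x : H α, x ≠ 0} :=
  ⟨Hc.support, Set.ext fun α => nontrivial_iff_exists_ne (0 : H α)⟩
end

section
/- Let H = {H_α}_{α∈π} be a Hopf π-coalgebra. Then each antipode map S_α: H_α → H_{α⁻¹} is an anti-homomorphism of algebras: S_α(xy) = S_α(y)S_α(x) for all x,y ∈ H_α, and S_α(1_α) = 1_{α⁻¹}. -/
open TensorProduct

set_option linter.unusedSectionVars false
set_option synthInstance.maxHeartbeats 1000000
set_option maxHeartbeats 1000000

namespace AntiAux

variable {k : Type} [Field k] {π : Type} [Group π] {H : π → Type}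
  [∀ α, Ring (H α)] [∀ α, Algebra k (H α)]

theorem castL_refl' {α : π} (h : α = α) : castL k H h = LinearMap.id := rfl

theorem castL_refl {α : π} (h : α = α) (x : H α) : castL k H h x = x := rfl

theorem castL_castL {α β γ : π} (h : α = β) (h' : β = γ) (x : H α) :
    castL k H h' (castL k H h x) = castL k H (h.trans h') x := by subst h; subst h'; rfl

theorem castL_one {α β : π} (h : α = β) : castL k H h (1 : H α) = 1 := by subst h; rfl

theorem castL_mul {α β : π} (h : α = β) (x y : H α) :
    castL k H h (x * y) = castL k H h x * castL k H h y := by subst h; rfl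

variable (Hc : HopfGrpCoalg k π H)

theorem comul_cast {a a' b b' : π} (ha : a = a') (hb : b = b') (hab : a * b = a' * b')
    (x : H (a * b)) :
    Hc.comul a' b' (castL k H hab x)
      = TensorProduct.map (castL k H ha) (castL k H hb) (Hc.comul a b x) := by
  subst ha; subst hb
  simp [castL_refl, castL_refl']

theorem antipode_cast {a a' : π} (ha : a = a') (hi : a⁻¹ = a'⁻¹) (x : H a) :
    Hc.antipode a' (castL k H ha x) = castL k H hi (Hc.antipode a x) := by
  subst ha; rfl

variable (β : π)

/-- `G (x ⊗ y) = S x * y` on `H β ⊗ H β⁻¹`. -/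
noncomputable def Gm : H β ⊗[k] H β⁻¹ →ₗ[k] H β⁻¹ :=
  LinearMap.mul' k (H β⁻¹) ∘ₗ TensorProduct.map (Hc.antipode β) LinearMap.id

/-- `G' (x ⊗ y) = x * S y` on `H β⁻¹ ⊗ H β`. -/
noncomputable def G'm : H β⁻¹ ⊗[k] H β →ₗ[k] H β⁻¹ :=
  LinearMap.mul' k (H β⁻¹) ∘ₗ TensorProduct.map LinearMap.id (Hc.antipode β)

noncomputable def Em : H (1:π) →ₗ[k] H β ⊗[k] H β⁻¹ :=
  (Hc.comul β β⁻¹).toLinearMap ∘ₗ castL k H (mul_inv_cancel β).symm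

noncomputable def E'm : H (1:π) →ₗ[k] H β⁻¹ ⊗[k] H β :=
  (Hc.comul β⁻¹ β).toLinearMap ∘ₗ castL k H (inv_mul_cancel β).symm

noncomputable def D1 : H β →ₗ[k] H β ⊗[k] H (1:π) :=
  (Hc.comul β 1).toLinearMap ∘ₗ castL k H (mul_one β).symm

noncomputable def D1' : H β →ₗ[k] H (1:π) ⊗[k] H β :=
  (Hc.comul 1 β).toLinearMap ∘ₗ castL k H (one_mul β).symm

noncomputable def ThA : H β →ₗ[k] H β ⊗[k] (H β⁻¹ ⊗[k] H β) :=
  TensorProduct.map LinearMap.id (E'm Hc β) ∘ₗ D1 Hc β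

noncomputable def ThB : H β →ₗ[k] (H β ⊗[k] H β⁻¹) ⊗[k] H β :=
  TensorProduct.map (Em Hc β) LinearMap.id ∘ₗ D1' Hc β

noncomputable def Fm :
    (H β ⊗[k] (H β⁻¹ ⊗[k] H β)) ⊗[k] (H β ⊗[k] (H β⁻¹ ⊗[k] H β)) →ₗ[k] H β⁻¹ :=
  LinearMap.mul' k (H β⁻¹) ∘ₗ
    TensorProduct.map
      (Hc.antipode β ∘ₗ LinearMap.mul' k (H β))
      (LinearMap.mul' k (H β⁻¹) ∘ₗ
        TensorProduct.map (LinearMap.mul' k (H β⁻¹))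
          (LinearMap.mul' k (H β⁻¹) ∘ₗ
            TensorProduct.map (Hc.antipode β) (Hc.antipode β) ∘ₗ
            (TensorProduct.comm k (H β) (H β)).toLinearMap) ∘ₗ
        (tensorTensorTensorComm k (H β⁻¹) (H β) (H β⁻¹) (H β)).toLinearMap) ∘ₗ
    (tensorTensorTensorComm k (H β) (H β⁻¹ ⊗[k] H β) (H β) (H β⁻¹ ⊗[k] H β)).toLinearMap

theorem Fm_tmul (a a' : H β) (b b' : H β⁻¹) (c c' : H β) :
    Fm Hc β ((a ⊗ₜ (b ⊗ₜ c)) ⊗ₜ (a' ⊗ₜ (b' ⊗ₜ c')))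
      = Hc.antipode β (a * a') *
          ((b * b') * (Hc.antipode β c' * Hc.antipode β c)) := by
  simp [Fm, tensorTensorTensorComm_tmul, comm_tmul, map_tmul, LinearMap.mul'_apply]

theorem G'm_tmul (b : H β⁻¹) (c : H β) : G'm Hc β (b ⊗ₜ c) = b * Hc.antipode β c := by
  simp [G'm, LinearMap.mul'_apply]

theorem Gm_tmul (a : H β) (b : H β⁻¹) : Gm Hc β (a ⊗ₜ b) = Hc.antipode β a * b := by
  simp [Gm, LinearMap.mul'_apply]

theorem Em_mul (x y : H (1:π)) : Em Hc β (x * y) = Em Hc β x * Em Hc β y := by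
  simp [Em, castL_mul, map_mul]

theorem map_map {A B C D P Q : Type} [AddCommMonoid A] [AddCommMonoid B] [AddCommMonoid C]
    [AddCommMonoid D] [AddCommMonoid P] [AddCommMonoid Q]
    [Module k A] [Module k B] [Module k C] [Module k D] [Module k P] [Module k Q]
    (f₁ : A →ₗ[k] B) (f₂ : B →ₗ[k] C) (g₁ : P →ₗ[k] Q) (g₂ : Q →ₗ[k] D)
    (y : A ⊗[k] P) :
    TensorProduct.map f₂ g₂ (TensorProduct.map f₁ g₁ y)
      = TensorProduct.map (f₂ ∘ₗ f₁) (g₂ ∘ₗ g₁) y := by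
  rw [← LinearMap.comp_apply, ← TensorProduct.map_comp]

/-- the composite `castL ∘ S_{β⁻¹⁻¹} ∘ castL = S_β`. -/
theorem SS (x : H β) :
    castL k H (inv_inv β⁻¹) (Hc.antipode β⁻¹⁻¹ (castL k H (inv_inv β).symm x))
      = Hc.antipode β x := by
  rw [antipode_cast Hc ((inv_inv β).symm) (congrArg Inv.inv (inv_inv β).symm),
    castL_castL, castL_refl]

theorem cleanA (z : H (1:π)) :
    Gm Hc β (Em Hc β z) = Hc.counit z • 1 := by
  have hab : β * β⁻¹ = β⁻¹⁻¹ * β⁻¹ := by group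
  have h := Hc.antipode_mul β⁻¹ z
  have e1 : castL k H (inv_mul_cancel β⁻¹).symm z
      = castL k H hab (castL k H (mul_inv_cancel β).symm z) :=
    (castL_castL (mul_inv_cancel β).symm hab z).symm
  rw [e1, comul_cast Hc (inv_inv β).symm rfl hab] at h
  have key : ∀ t : H β ⊗[k] H β⁻¹,
      TensorProduct.map (castL k H (inv_inv β⁻¹) ∘ₗ Hc.antipode β⁻¹⁻¹) LinearMap.id
        (TensorProduct.map (castL k H (inv_inv β).symm) (castL k H (rfl : β⁻¹ = β⁻¹)) t)
      = TensorProduct.map (Hc.antipode β) LinearMap.id t := by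
    intro t
    induction t using TensorProduct.induction_on with
    | zero => simp
    | tmul a b => simp [castL_refl, SS]
    | add x y hx hy => simp only [map_add, hx, hy]
  rw [key] at h
  simpa [Gm, Em] using h

theorem cleanB (z : H (1:π)) :
    G'm Hc β (E'm Hc β z) = Hc.counit z • 1 := by
  have hab : β⁻¹ * β = β⁻¹ * β⁻¹⁻¹ := by group
  have h := Hc.mul_antipode β⁻¹ z
  have e1 : castL k H (mul_inv_cancel β⁻¹).symm z
      = castL k H hab (castL k H (inv_mul_cancel β).symm z) :=
    (castL_castL (inv_mul_cancel β).symm hab z).symm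
  rw [e1, comul_cast Hc rfl (inv_inv β).symm hab] at h
  have key : ∀ t : H β⁻¹ ⊗[k] H β,
      TensorProduct.map LinearMap.id (castL k H (inv_inv β⁻¹) ∘ₗ Hc.antipode β⁻¹⁻¹)
        (TensorProduct.map (castL k H (rfl : β⁻¹ = β⁻¹)) (castL k H (inv_inv β).symm) t)
      = TensorProduct.map LinearMap.id (Hc.antipode β) t := by
    intro t
    induction t using TensorProduct.induction_on with
    | zero => simp
    | tmul a b => simp [castL_refl, SS]
    | add x y hx hy => simp only [map_add, hx, hy]
  rw [key] at h
  simpa [G'm, E'm] using h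

theorem coassocβ (w : H β) :
    (TensorProduct.assoc k (H β) (H β⁻¹) (H β)) (ThB Hc β w) = ThA Hc β w := by
  have hβ : β = β * β⁻¹ * β := by group
  have h1 : (1:π) * β = β * β⁻¹ * β := by group
  have h2 : β * 1 = β * (β⁻¹ * β) := by group
  have h := Hc.coassoc β β⁻¹ β (castL k H hβ w)
  have e1 : castL k H hβ w = castL k H h1 (castL k H (one_mul β).symm w) :=
    (castL_castL (one_mul β).symm h1 w).symm
  have e2 : castL k H (mul_assoc β β⁻¹ β) (castL k H hβ w)
      = castL k H h2 (castL k H (mul_one β).symm w) := by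
    rw [castL_castL, castL_castL]
  rw [e2, comul_cast Hc rfl (inv_mul_cancel β).symm h2] at h
  rw [e1, comul_cast Hc (mul_inv_cancel β).symm rfl h1] at h
  rw [map_map, map_map] at h
  simp only [castL_refl', LinearMap.id_comp, LinearMap.comp_id] at h
  simpa [ThA, ThB, Em, E'm, D1, D1'] using h

theorem counitR (w : H β) :
    (TensorProduct.rid k (H β))
      ((LinearMap.lTensor (H β) Hc.counit.toLinearMap) (D1 Hc β w)) = w := by
  have h := Hc.counit_right β (castL k H (mul_one β).symm w)
  rw [castL_castL, castL_refl] at h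
  simpa [D1] using h

theorem counitL (w : H β) :
    (TensorProduct.lid k (H β))
      ((LinearMap.rTensor (H β) Hc.counit.toLinearMap) (D1' Hc β w)) = w := by
  have h := Hc.counit_left β (castL k H (one_mul β).symm w)
  rw [castL_castL, castL_refl] at h
  simpa [D1'] using h

theorem stepII1 (a a' : H β) (b : H β⁻¹) (c : H β) (q' : H β⁻¹ ⊗[k] H β) :
    Fm Hc β ((a ⊗ₜ (b ⊗ₜ c)) ⊗ₜ (a' ⊗ₜ q'))
      = Hc.antipode β (a * a') * (b * (G'm Hc β q' * Hc.antipode β c)) := by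
  induction q' using TensorProduct.induction_on with
  | zero => simp
  | tmul b' c' =>
      rw [Fm_tmul, G'm_tmul]
      simp [mul_assoc]
  | add x y hx hy => simp only [tmul_add, map_add, hx, hy, add_mul, mul_add]

theorem stepII2 (a a' : H β) (V : H (1:π)) (q : H β⁻¹ ⊗[k] H β) :
    Fm Hc β ((a ⊗ₜ q) ⊗ₜ (a' ⊗ₜ E'm Hc β V))
      = Hc.counit V • (Hc.antipode β (a * a') * G'm Hc β q) := by
  induction q using TensorProduct.induction_on with
  | zero => simp
  | tmul b c =>
      rw [stepII1, cleanB, G'm_tmul]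
      simp [smul_mul_assoc, mul_smul_comm]
  | add x y hx hy =>
      simp only [tmul_add, add_tmul, map_add, hx, hy, mul_add, smul_add]

theorem claimII_aux (t s : H β ⊗[k] H (1:π)) :
    Fm Hc β ((TensorProduct.map LinearMap.id (E'm Hc β) t)
        ⊗ₜ (TensorProduct.map LinearMap.id (E'm Hc β) s))
      = Hc.antipode β
          ((TensorProduct.rid k (H β)) ((LinearMap.lTensor (H β) Hc.counit.toLinearMap) t)
            * (TensorProduct.rid k (H β)) ((LinearMap.lTensor (H β) Hc.counit.toLinearMap) s)) := by
  induction t using TensorProduct.induction_on with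
  | zero => simp
  | tmul a U =>
      induction s using TensorProduct.induction_on with
      | zero => simp
      | tmul a' V =>
          simp only [map_tmul, LinearMap.id_coe, id_eq, LinearMap.lTensor_tmul,
            AlgHom.toLinearMap_apply, rid_tmul]
          rw [stepII2, cleanB]
          simp only [smul_mul_assoc, mul_smul_comm, smul_smul, mul_one, map_smul]
          try rw [mul_comm (Hc.counit V) (Hc.counit U)]
      | add s1 s2 hs1 hs2 =>
          simp only [map_add, tmul_add, hs1, hs2, mul_add, smul_add]
  | add t1 t2 ht1 ht2 =>
      simp only [map_add, add_tmul, ht1, ht2, add_mul, smul_add]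

theorem stepI1 (p p' : H β ⊗[k] H β⁻¹) (c c' : H β) :
    Fm Hc β ((TensorProduct.assoc k (H β) (H β⁻¹) (H β) (p ⊗ₜ c))
        ⊗ₜ (TensorProduct.assoc k (H β) (H β⁻¹) (H β) (p' ⊗ₜ c')))
      = Gm Hc β (p * p') * (Hc.antipode β c' * Hc.antipode β c) := by
  induction p using TensorProduct.induction_on with
  | zero => simp
  | tmul a b =>
      induction p' using TensorProduct.induction_on with
      | zero => simp
      | tmul a' b' =>
          rw [assoc_tmul, assoc_tmul, Fm_tmul, Algebra.TensorProduct.tmul_mul_tmul, Gm_tmul]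
          simp only [mul_assoc]
      | add x y hx hy =>
          simp only [add_tmul, map_add, tmul_add, hx, hy, mul_add, add_mul]
  | add x y hx hy =>
      simp only [add_tmul, map_add, tmul_add, hx, hy, mul_add, add_mul]

theorem claimI_aux (t s : H (1:π) ⊗[k] H β) :
    Fm Hc β ((TensorProduct.assoc k (H β) (H β⁻¹) (H β)
          (TensorProduct.map (Em Hc β) LinearMap.id t))
        ⊗ₜ (TensorProduct.assoc k (H β) (H β⁻¹) (H β)
          (TensorProduct.map (Em Hc β) LinearMap.id s)))
      = Hc.antipode β
            ((TensorProduct.lid k (H β)) ((LinearMap.rTensor (H β) Hc.counit.toLinearMap) s))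
        * Hc.antipode β
            ((TensorProduct.lid k (H β)) ((LinearMap.rTensor (H β) Hc.counit.toLinearMap) t)) := by
  induction t using TensorProduct.induction_on with
  | zero => simp
  | tmul U c =>
      induction s using TensorProduct.induction_on with
      | zero => simp
      | tmul V c' =>
          simp only [map_tmul, LinearMap.id_coe, id_eq, LinearMap.rTensor_tmul,
            AlgHom.toLinearMap_apply, lid_tmul]
          rw [stepI1, ← Em_mul, cleanA]
          simp only [map_smul, smul_mul_assoc, mul_smul_comm, smul_smul, one_mul, map_mul]
          try rw [mul_comm (Hc.counit U) (Hc.counit V)]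
      | add s1 s2 hs1 hs2 =>
          simp only [map_add, tmul_add, hs1, hs2, mul_add, add_mul, smul_add]
  | add t1 t2 ht1 ht2 =>
      simp only [map_add, add_tmul, ht1, ht2, mul_add, add_mul, smul_add]

end AntiAux

open AntiAux

/-- Each antipode map `S_α : H α → H α⁻¹` of a Hopf `π`-coalgebra is an anti-homomorphism of
algebras: `S_α (x*y) = S_α y * S_α x` and `S_α 1 = 1`. -/
theorem antipode_anti_hom (k : Type) [Field k] (π : Type) [Group π] (H : π → Type)
    [∀ α, Ring (H α)] [∀ α, Algebra k (H α)] (Hc : HopfGrpCoalg k π H) :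
    (∀ (α : π) (x y : H α), Hc.antipode α (x * y) = Hc.antipode α y * Hc.antipode α x) ∧
    (∀ α : π, Hc.antipode α 1 = 1) := by
  constructor
  · intro β u v
    have h2 := claimII_aux Hc β (D1 Hc β u) (D1 Hc β v)
    rw [counitR, counitR] at h2
    have h1 := claimI_aux Hc β (D1' Hc β u) (D1' Hc β v)
    rw [counitL, counitL] at h1
    have eB : ∀ w : H β, TensorProduct.map (Em Hc β) LinearMap.id (D1' Hc β w)
        = ThB Hc β w := fun _ => rfl
    have eA : ∀ w : H β, TensorProduct.map LinearMap.id (E'm Hc β) (D1 Hc β w)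
        = ThA Hc β w := fun _ => rfl
    rw [eB, eB, coassocβ, coassocβ] at h1
    rw [eA, eA] at h2
    rw [← h2]
    exact h1
  · intro β
    have h := cleanA Hc β 1
    have e : Em Hc β (1 : H (1:π)) = (1 : H β) ⊗ₜ[k] (1 : H β⁻¹) := by
      simp [Em, castL_one, Algebra.TensorProduct.one_def]
    rw [e, Gm_tmul, mul_one] at h
    simpa using h
end

section
/- Let H = {H_α}_{α∈π} be a Hopf π-coalgebra. Then the antipode is anti-comultiplicative: ε ∘ S_1 = ε, and for all α, β ∈ π, Δ_{β⁻¹,α⁻¹} ∘ S_{αβ} = σ ∘ (S_α ⊗ S_β) ∘ Δ_{α,β}, where σ: H_{α⁻¹} ⊗ H_{β⁻¹} → H_{β⁻¹} ⊗ H_{α⁻¹} is the flip map. -/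
open TensorProduct

section Cast
variable {k : Type} [Field k] {π : Type} {H : π → Type}
  [∀ α, Ring (H α)] [∀ α, Algebra k (H α)]

lemma castL_self {α : π} (h : α = α) (x : H α) : castL k H h x = x := by
  rw [Subsingleton.elim h rfl]; rfl

lemma castL_eq_id {α : π} (h : α = α) : castL k H h = LinearMap.id := by
  ext x; exact castL_self h x

lemma castL_castL {α β γ : π} (h1 : α = β) (h2 : β = γ) (x : H α) :
    castL k H h2 (castL k H h1 x) = castL k H (h1.trans h2) x := by
  subst h1; subst h2; rfl

lemma castL_mul {α β : π} (h : α = β) (x y : H α) :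
    castL k H h (x * y) = castL k H h x * castL k H h y := by subst h; rfl

lemma castL_one {α β : π} (h : α = β) : castL k H h (1 : H α) = 1 := by subst h; rfl

lemma mul'_map_castL {α β : π} (h : α = β) (z : H α ⊗[k] H α) :
    LinearMap.mul' k (H β) (TensorProduct.map (castL k H h) (castL k H h) z)
      = castL k H h (LinearMap.mul' k (H α) z) := by
  subst h
  simp only [castL_eq_id, TensorProduct.map_id, LinearMap.id_coe, id_eq]

end Cast

section Derived
variable {k : Type} [Field k] {π : Type} [Group π] {H : π → Type}
  [∀ α, Ring (H α)] [∀ α, Algebra k (H α)] (Hc : HopfGrpCoalg k π H)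

lemma comul_castL {α' α β' β : π} (h1 : α' = α) (h2 : β' = β) (h : α' * β' = α * β)
    (x : H (α' * β')) :
    Hc.comul α β (castL k H h x)
      = TensorProduct.map (castL k H h1) (castL k H h2) (Hc.comul α' β' x) := by
  subst h1; subst h2
  simp only [castL_self, castL_eq_id, TensorProduct.map_id, LinearMap.id_coe, id_eq]

lemma antipode_castL {α' α : π} (h : α' = α) (h' : α'⁻¹ = α⁻¹) (x : H α') :
    Hc.antipode α (castL k H h x) = castL k H h' (Hc.antipode α' x) := by
  subst h; rw [castL_self, castL_self]

lemma counit_right' {δ ρ : π} (hρ : ρ = 1) (h : δ * ρ = δ) (x : H (δ * ρ)) :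
    (TensorProduct.rid k (H δ))
      ((LinearMap.lTensor (H δ) (Hc.counit.toLinearMap ∘ₗ castL k H hρ)) (Hc.comul δ ρ x))
      = castL k H h x := by
  subst hρ
  rw [castL_eq_id, LinearMap.comp_id, Subsingleton.elim h (mul_one δ)]
  exact Hc.counit_right δ x

lemma counit_left' {δ ρ : π} (hδ : δ = 1) (h : δ * ρ = ρ) (x : H (δ * ρ)) :
    (TensorProduct.lid k (H ρ))
      ((LinearMap.rTensor (H ρ) (Hc.counit.toLinearMap ∘ₗ castL k H hδ)) (Hc.comul δ ρ x))
      = castL k H h x := by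
  subst hδ
  rw [castL_eq_id, LinearMap.comp_id, Subsingleton.elim h (one_mul ρ)]
  exact Hc.counit_left ρ x

end Derived
section Derived
variable {k : Type} [Field k] {π : Type} [Group π] {H : π → Type}
  [∀ α, Ring (H α)] [∀ α, Algebra k (H α)] (Hc : HopfGrpCoalg k π H)

lemma antipode_comp_castL (γ : π) :
    (castL k H (inv_inv γ⁻¹) ∘ₗ Hc.antipode γ⁻¹⁻¹) ∘ₗ castL k H (inv_inv γ).symm
      = Hc.antipode γ := by
  ext a
  simp only [LinearMap.comp_apply]
  rw [antipode_castL Hc (inv_inv γ).symm (congrArg Inv.inv (inv_inv γ).symm),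
    castL_castL, castL_self]

lemma map_map_apply {M N P Q M' N' : Type} [AddCommMonoid M] [AddCommMonoid N]
    [AddCommMonoid P] [AddCommMonoid Q] [AddCommMonoid M'] [AddCommMonoid N']
    [Module k M] [Module k N] [Module k P] [Module k Q] [Module k M'] [Module k N']
    (f : P →ₗ[k] M') (g : Q →ₗ[k] N') (f' : M →ₗ[k] P) (g' : N →ₗ[k] Q) (z : M ⊗[k] N) :
    TensorProduct.map f g (TensorProduct.map f' g' z)
      = TensorProduct.map (f ∘ₗ f') (g ∘ₗ g') z := by
  rw [TensorProduct.map_comp]; rfl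

lemma L1 (γ : π) (x : H (γ * γ⁻¹)) :
    LinearMap.mul' k (H γ⁻¹)
      (TensorProduct.map (Hc.antipode γ) LinearMap.id (Hc.comul γ γ⁻¹ x))
      = Hc.counit (castL k H (mul_inv_cancel γ) x) • 1 := by
  have A := Hc.antipode_mul γ⁻¹ (castL k H (mul_inv_cancel γ) x)
  rw [castL_castL, comul_castL Hc (inv_inv γ).symm rfl] at A
  rw [map_map_apply, antipode_comp_castL, castL_eq_id, LinearMap.comp_id] at A
  exact A

lemma L2 (γ : π) (x : H (γ⁻¹ * γ)) :
    LinearMap.mul' k (H γ⁻¹)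
      (TensorProduct.map LinearMap.id (Hc.antipode γ) (Hc.comul γ⁻¹ γ x))
      = Hc.counit (castL k H (inv_mul_cancel γ) x) • 1 := by
  have A := Hc.mul_antipode γ⁻¹ (castL k H (inv_mul_cancel γ) x)
  rw [castL_castL, comul_castL Hc rfl (inv_inv γ).symm] at A
  rw [map_map_apply, antipode_comp_castL, castL_eq_id, LinearMap.comp_id] at A
  exact A

end Derived
section Conv
variable {k : Type} [Field k] {π : Type} [Group π] {H : π → Type}
  [∀ α, Ring (H α)] [∀ α, Algebra k (H α)] (Hc : HopfGrpCoalg k π H)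
  {B : Type} [Ring B] [Algebra k B]

/-- Convolution of two linear maps into a `k`-algebra `B`. -/
noncomputable def conv (γ δ : π) (f : H γ →ₗ[k] B) (g : H δ →ₗ[k] B) :
    H (γ * δ) →ₗ[k] B :=
  LinearMap.mul' k B ∘ₗ TensorProduct.map f g ∘ₗ (Hc.comul γ δ).toLinearMap

/-- The unit of the convolution algebra. -/
noncomputable def eL (B : Type) [Ring B] [Algebra k B] : H 1 →ₗ[k] B :=
  Algebra.linearMap k B ∘ₗ Hc.counit.toLinearMap

lemma mul3 (z : (B ⊗[k] B) ⊗[k] B) :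
    LinearMap.mul' k B (LinearMap.rTensor B (LinearMap.mul' k B) z)
      = LinearMap.mul' k B (LinearMap.lTensor B (LinearMap.mul' k B)
          ((TensorProduct.assoc k B B B) z)) := by
  have : (LinearMap.mul' k B) ∘ₗ LinearMap.rTensor B (LinearMap.mul' k B)
      = (LinearMap.mul' k B) ∘ₗ LinearMap.lTensor B (LinearMap.mul' k B) ∘ₗ
        (TensorProduct.assoc k B B B).toLinearMap := by
    apply TensorProduct.ext_threefold
    intro x y w
    simp [LinearMap.mul'_apply, mul_assoc]
  exact congrArg (fun (F : _ →ₗ[k] B) => F z) this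

lemma assoc_nat {M N P M' N' P' : Type} [AddCommMonoid M] [AddCommMonoid N]
    [AddCommMonoid P] [AddCommMonoid M'] [AddCommMonoid N'] [AddCommMonoid P']
    [Module k M] [Module k N] [Module k P] [Module k M'] [Module k N'] [Module k P']
    (f : M →ₗ[k] M') (g : N →ₗ[k] N') (h : P →ₗ[k] P') (z : (M ⊗[k] N) ⊗[k] P) :
    (TensorProduct.assoc k M' N' P')
        (TensorProduct.map (TensorProduct.map f g) h z)
      = TensorProduct.map f (TensorProduct.map g h)
          ((TensorProduct.assoc k M N P) z) := by
  have : (TensorProduct.assoc k M' N' P').toLinearMap ∘ₗ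
        TensorProduct.map (TensorProduct.map f g) h
      = TensorProduct.map f (TensorProduct.map g h) ∘ₗ
        (TensorProduct.assoc k M N P).toLinearMap := by
    apply TensorProduct.ext_threefold
    intro x y w
    simp
  exact congrArg (fun (F : _ →ₗ[k] _) => F z) this

lemma conv_assoc {γ δ ρ : π} (f : H γ →ₗ[k] B) (g : H δ →ₗ[k] B) (e : H ρ →ₗ[k] B)
    (x : H (γ * δ * ρ)) :
    conv Hc (γ * δ) ρ (conv Hc γ δ f g) e x
      = conv Hc γ (δ * ρ) f (conv Hc δ ρ g e) (castL k H (mul_assoc γ δ ρ) x) := by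
  set ΔL := (Hc.comul γ δ).toLinearMap with hΔL
  set ΔR := (Hc.comul δ ρ).toLinearMap with hΔR
  set t := (Hc.comul (γ * δ) ρ) x with ht
  have h1 : conv Hc (γ * δ) ρ (conv Hc γ δ f g) e x
      = LinearMap.mul' k B (TensorProduct.map (LinearMap.mul' k B) LinearMap.id
          (TensorProduct.map (TensorProduct.map f g) LinearMap.id
            (TensorProduct.map ΔL e t))) := by
    rw [map_map_apply, map_map_apply]; rfl
  rw [h1]
  have h2 : TensorProduct.map ΔL e t
      = TensorProduct.map LinearMap.id e (TensorProduct.map ΔL LinearMap.id t) := by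
    rw [map_map_apply]; rfl
  rw [h2]
  have h3 : TensorProduct.map (TensorProduct.map f g) LinearMap.id
        (TensorProduct.map LinearMap.id e (TensorProduct.map ΔL LinearMap.id t))
      = TensorProduct.map (TensorProduct.map f g) e
          (TensorProduct.map ΔL LinearMap.id t) := by
    rw [map_map_apply]; rfl
  rw [h3]
  -- use mul3
  have h4 := mul3 (B := B) (TensorProduct.map (TensorProduct.map f g) e
      (TensorProduct.map ΔL LinearMap.id t))
  rw [show LinearMap.rTensor B (LinearMap.mul' k B) = TensorProduct.map (LinearMap.mul' k B) LinearMap.id from rfl] at h4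
  rw [h4]
  rw [assoc_nat]
  have h5 := Hc.coassoc γ δ ρ x
  rw [show TensorProduct.map ΔL LinearMap.id t
      = TensorProduct.map ΔL LinearMap.id ((Hc.comul (γ * δ) ρ) x) from rfl, h5]
  rw [show LinearMap.lTensor B (LinearMap.mul' k B) = TensorProduct.map LinearMap.id (LinearMap.mul' k B) from rfl]
  rw [map_map_apply, map_map_apply]
  rfl

end Conv
section Conv2
variable {k : Type} [Field k] {π : Type} [Group π] {H : π → Type}
  [∀ α, Ring (H α)] [∀ α, Algebra k (H α)] (Hc : HopfGrpCoalg k π H)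
  {B : Type} [Ring B] [Algebra k B]

lemma conv_eL_right {γ : π} (f : H γ →ₗ[k] B) (x : H (γ * 1)) :
    conv Hc γ 1 f (eL Hc B) x = f (castL k H (mul_one γ) x) := by
  have hmap : (LinearMap.mul' k B) ∘ₗ TensorProduct.map f (eL Hc B)
      = f ∘ₗ (TensorProduct.rid k (H γ)).toLinearMap ∘ₗ
          LinearMap.lTensor (H γ) Hc.counit.toLinearMap := by
    apply TensorProduct.ext'
    intro a b
    simp only [LinearMap.comp_apply, TensorProduct.map_tmul, LinearMap.mul'_apply,
      LinearMap.lTensor_tmul, LinearEquiv.coe_coe, TensorProduct.rid_tmul, eL,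
      Algebra.linearMap_apply, AlgHom.toLinearMap_apply, map_smul]
    rw [← Algebra.commutes (Hc.counit b) (f a), ← Algebra.smul_def]
  have := congrArg (fun (F : H γ ⊗[k] H 1 →ₗ[k] B) => F (Hc.comul γ 1 x)) hmap
  simp only [LinearMap.comp_apply] at this
  have h2 := Hc.counit_right γ x
  calc conv Hc γ 1 f (eL Hc B) x
      = (LinearMap.mul' k B) (TensorProduct.map f (eL Hc B) (Hc.comul γ 1 x)) := rfl
    _ = f ((TensorProduct.rid k (H γ))
          (LinearMap.lTensor (H γ) Hc.counit.toLinearMap (Hc.comul γ 1 x))) := this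
    _ = f (castL k H (mul_one γ) x) := by rw [h2]

lemma conv_eL_left {γ : π} (f : H γ →ₗ[k] B) (x : H (1 * γ)) :
    conv Hc 1 γ (eL Hc B) f x = f (castL k H (one_mul γ) x) := by
  have hmap : (LinearMap.mul' k B) ∘ₗ TensorProduct.map (eL Hc B) f
      = f ∘ₗ (TensorProduct.lid k (H γ)).toLinearMap ∘ₗ
          LinearMap.rTensor (H γ) Hc.counit.toLinearMap := by
    apply TensorProduct.ext'
    intro a b
    simp only [LinearMap.comp_apply, TensorProduct.map_tmul, LinearMap.mul'_apply,
      LinearMap.rTensor_tmul, LinearEquiv.coe_coe, TensorProduct.lid_tmul, eL,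
      Algebra.linearMap_apply, AlgHom.toLinearMap_apply, map_smul]
    rw [← Algebra.smul_def]
  have := congrArg (fun (F : H 1 ⊗[k] H γ →ₗ[k] B) => F (Hc.comul 1 γ x)) hmap
  simp only [LinearMap.comp_apply] at this
  have h2 := Hc.counit_left γ x
  calc conv Hc 1 γ (eL Hc B) f x
      = (LinearMap.mul' k B) (TensorProduct.map (eL Hc B) f (Hc.comul 1 γ x)) := rfl
    _ = f ((TensorProduct.lid k (H γ))
          (LinearMap.rTensor (H γ) Hc.counit.toLinearMap (Hc.comul 1 γ x))) := this
    _ = f (castL k H (one_mul γ) x) := by rw [h2]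

lemma conv_castL_right {γ δ' δ : π} (hδ : δ' = δ) (h : γ * δ' = γ * δ)
    (f : H γ →ₗ[k] B) (g : H δ →ₗ[k] B) (x : H (γ * δ')) :
    conv Hc γ δ f g (castL k H h x) = conv Hc γ δ' f (g ∘ₗ castL k H hδ) x := by
  subst hδ
  rw [castL_self, castL_eq_id, LinearMap.comp_id]

lemma conv_castL_left {γ' γ δ : π} (hγ : γ' = γ) (h : γ' * δ = γ * δ)
    (f : H γ →ₗ[k] B) (g : H δ →ₗ[k] B) (x : H (γ' * δ)) :
    conv Hc γ δ f g (castL k H h x) = conv Hc γ' δ (f ∘ₗ castL k H hγ) g x := by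
  subst hγ
  rw [castL_self, castL_eq_id, LinearMap.comp_id]

lemma conv_congr_right {γ δ : π} (f : H γ →ₗ[k] B) {g g' : H δ →ₗ[k] B} (h : ∀ y, g y = g' y)
    (x : H (γ * δ)) : conv Hc γ δ f g x = conv Hc γ δ f g' x := by
  have : g = g' := LinearMap.ext h
  rw [this]

end Conv2
section Claims
variable {k : Type} [Field k] {π : Type} [Group π] {H : π → Type}
  [∀ α, Ring (H α)] [∀ α, Algebra k (H α)] (Hc : HopfGrpCoalg k π H)

lemma mul'_map_algHom {B C : Type} [Ring B] [Ring C] [Algebra k B] [Algebra k C]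
    (T : B →ₐ[k] C) (z : B ⊗[k] B) :
    LinearMap.mul' k C (TensorProduct.map T.toLinearMap T.toLinearMap z)
      = T (LinearMap.mul' k B z) := by
  induction z using TensorProduct.induction_on with
  | zero => simp
  | tmul a b => simp [LinearMap.mul'_apply]
  | add u v hu hv => simp only [map_add, hu, hv]

noncomputable def Dm (α β : π) : H ((α * β)⁻¹) →ₗ[k] H β⁻¹ ⊗[k] H α⁻¹ :=
  (Hc.comul β⁻¹ α⁻¹).toLinearMap ∘ₗ castL k H (mul_inv_rev α β)

noncomputable def Fm (α β : π) : H (α * β) →ₗ[k] H β⁻¹ ⊗[k] H α⁻¹ :=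
  Dm Hc α β ∘ₗ Hc.antipode (α * β)

noncomputable def Gm (α β : π) : H (α * β) →ₗ[k] H β⁻¹ ⊗[k] H α⁻¹ :=
  (TensorProduct.comm k (H α⁻¹) (H β⁻¹)).toLinearMap ∘ₗ
    TensorProduct.map (Hc.antipode α) (Hc.antipode β) ∘ₗ (Hc.comul α β).toLinearMap

lemma claim1 (α β : π) (x : H ((α * β) * (α * β)⁻¹)) :
    conv Hc (α * β) (α * β)⁻¹ (Fm Hc α β) (Dm Hc α β) x
      = eL Hc (H β⁻¹ ⊗[k] H α⁻¹) (castL k H (mul_inv_cancel (α * β)) x) := by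
  have d1 : TensorProduct.map (Fm Hc α β) (Dm Hc α β) (Hc.comul ((α*β)) ((α*β)⁻¹) x)
      = TensorProduct.map (Hc.comul β⁻¹ α⁻¹).toLinearMap (Hc.comul β⁻¹ α⁻¹).toLinearMap
          (TensorProduct.map (castL k H (mul_inv_rev α β)) (castL k H (mul_inv_rev α β))
            (TensorProduct.map (Hc.antipode (α*β)) LinearMap.id
              (Hc.comul (α*β) (α*β)⁻¹ x))) := by
    rw [map_map_apply, map_map_apply]; rfl
  have : conv Hc (α*β) (α*β)⁻¹ (Fm Hc α β) (Dm Hc α β) x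
      = LinearMap.mul' k _ (TensorProduct.map (Fm Hc α β) (Dm Hc α β)
          (Hc.comul ((α*β)) ((α*β)⁻¹) x)) := rfl
  rw [this, d1, mul'_map_algHom, mul'_map_castL, L1]
  rw [map_smul, map_smul, castL_one, map_one]
  rw [eL]
  simp only [LinearMap.comp_apply, Algebra.linearMap_apply, AlgHom.toLinearMap_apply,
    Algebra.algebraMap_eq_smul_one]

end Claims
section Claim2
variable {k : Type} [Field k] {π : Type} [Group π] {H : π → Type}
  [∀ α, Ring (H α)] [∀ α, Algebra k (H α)] (Hc : HopfGrpCoalg k π H)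

lemma assoc_symm_nat {M N P M' N' P' : Type} [AddCommMonoid M] [AddCommMonoid N]
    [AddCommMonoid P] [AddCommMonoid M'] [AddCommMonoid N'] [AddCommMonoid P']
    [Module k M] [Module k N] [Module k P] [Module k M'] [Module k N'] [Module k P']
    (f : M →ₗ[k] M') (g : N →ₗ[k] N') (h : P →ₗ[k] P') (z : M ⊗[k] (N ⊗[k] P)) :
    (TensorProduct.assoc k M' N' P').symm
        (TensorProduct.map f (TensorProduct.map g h) z)
      = TensorProduct.map (TensorProduct.map f g) h
          ((TensorProduct.assoc k M N P).symm z) := by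
  apply (TensorProduct.assoc k M' N' P').injective
  rw [LinearEquiv.apply_symm_apply, assoc_nat, LinearEquiv.apply_symm_apply]

set_option maxHeartbeats 2000000 in
set_option synthInstance.maxHeartbeats 400000 in
lemma claim2 (α β : π) (x : H ((α * β)⁻¹ * (α * β))) :
    conv Hc (α * β)⁻¹ (α * β) (Dm Hc α β) (Gm Hc α β) x
      = eL Hc (H β⁻¹ ⊗[k] H α⁻¹) (castL k H (inv_mul_cancel (α * β)) x) := by
  have h₁ : (α * β)⁻¹ * (α * β) = β⁻¹ * α⁻¹ * (α * β) := by group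
  have h₂ : (α * β)⁻¹ * (α * β) = β⁻¹ * (α⁻¹ * (α * β)) := by group
  have h₃ : α⁻¹ * (α * β) = α⁻¹ * α * β := by group
  have h₆ : α⁻¹ * (α * β) = β := by group
  have h₇ : (α * β)⁻¹ * (α * β) = β⁻¹ * β := by group
  set Sa := Hc.antipode α with hSa
  set Sb := Hc.antipode β with hSb
  set Δ' := (Hc.comul β⁻¹ α⁻¹).toLinearMap with hΔ'
  -- step 0 : pull the cast through the outer comultiplication
  have e0 : Hc.comul (β⁻¹ * α⁻¹) (α * β) (castL k H h₁ x)
      = TensorProduct.map (castL k H (mul_inv_rev α β)) LinearMap.id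
          (Hc.comul ((α * β)⁻¹) (α * β) x) := by
    rw [comul_castL Hc (mul_inv_rev α β) rfl h₁ x, castL_eq_id]
  set t1 := Hc.comul (β⁻¹ * α⁻¹) (α * β) (castL k H h₁ x) with ht1
  have e1 : conv Hc (α * β)⁻¹ (α * β) (Dm Hc α β) (Gm Hc α β) x
      = LinearMap.mul' k (H β⁻¹ ⊗[k] H α⁻¹) (TensorProduct.map Δ' (Gm Hc α β) t1) := by
    rw [e0, map_map_apply]; rfl
  -- step 1 : first coassociativity
  have co1 := Hc.coassoc β⁻¹ α⁻¹ (α * β) (castL k H h₁ x)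
  rw [castL_castL] at co1
  set t2 := Hc.comul β⁻¹ (α⁻¹ * (α * β)) (castL k H (h₁.trans (mul_assoc β⁻¹ α⁻¹ (α*β))) x)
    with ht2
  have co1' : TensorProduct.map Δ' LinearMap.id t1
      = (TensorProduct.assoc k (H β⁻¹) (H α⁻¹) (H (α * β))).symm
          (TensorProduct.map LinearMap.id (Hc.comul α⁻¹ (α * β)).toLinearMap t2) := by
    rw [← co1, LinearEquiv.symm_apply_apply]
  have e2 : conv Hc (α * β)⁻¹ (α * β) (Dm Hc α β) (Gm Hc α β) x
      = LinearMap.mul' k (H β⁻¹ ⊗[k] H α⁻¹)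
          ((TensorProduct.assoc k (H β⁻¹) (H α⁻¹) (H β⁻¹ ⊗[k] H α⁻¹)).symm
            (TensorProduct.map LinearMap.id
              (TensorProduct.map LinearMap.id (Gm Hc α β))
              (TensorProduct.map LinearMap.id (Hc.comul α⁻¹ (α * β)).toLinearMap t2))) := by
    rw [e1]
    have : TensorProduct.map Δ' (Gm Hc α β) t1
        = TensorProduct.map LinearMap.id (Gm Hc α β)
            (TensorProduct.map Δ' LinearMap.id t1) := by
      rw [map_map_apply]; rfl
    rw [this, co1', assoc_symm_nat (f := LinearMap.id) (g := LinearMap.id)]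
    rw [TensorProduct.map_id]
  -- step 2 : second coassociativity, pointwise on the second leg
  set E : H (α⁻¹ * α) ⊗[k] H β →ₗ[k] H α⁻¹ ⊗[k] (H β⁻¹ ⊗[k] H α⁻¹) :=
    TensorProduct.map LinearMap.id
        ((TensorProduct.comm k (H α⁻¹) (H β⁻¹)).toLinearMap ∘ₗ TensorProduct.map Sa Sb) ∘ₗ
      (TensorProduct.assoc k (H α⁻¹) (H α) (H β)).toLinearMap ∘ₗ
      TensorProduct.map (Hc.comul α⁻¹ α).toLinearMap LinearMap.id with hE
  have Jlem : ∀ v : H (α⁻¹ * (α * β)),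
      TensorProduct.map LinearMap.id (Gm Hc α β) (Hc.comul α⁻¹ (α * β) v)
        = E (Hc.comul (α⁻¹ * α) β (castL k H h₃ v)) := by
    intro v
    have co2 := Hc.coassoc α⁻¹ α β (castL k H h₃ v)
    rw [castL_castL, castL_self] at co2
    have g1 : TensorProduct.map LinearMap.id (Gm Hc α β) (Hc.comul α⁻¹ (α * β) v)
        = TensorProduct.map LinearMap.id
            ((TensorProduct.comm k (H α⁻¹) (H β⁻¹)).toLinearMap ∘ₗ TensorProduct.map Sa Sb)
            (TensorProduct.map LinearMap.id (Hc.comul α β).toLinearMap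
              (Hc.comul α⁻¹ (α * β) v)) := by
      rw [map_map_apply]; rfl
    rw [g1, ← co2]
    rfl
  have JlemMap : TensorProduct.map LinearMap.id (Gm Hc α β) ∘ₗ (Hc.comul α⁻¹ (α*β)).toLinearMap
      = E ∘ₗ (Hc.comul (α⁻¹ * α) β).toLinearMap ∘ₗ castL k H h₃ := by
    ext v; exact Jlem v
  have e3 : conv Hc (α * β)⁻¹ (α * β) (Dm Hc α β) (Gm Hc α β) x
      = LinearMap.mul' k (H β⁻¹ ⊗[k] H α⁻¹)
          ((TensorProduct.assoc k (H β⁻¹) (H α⁻¹) (H β⁻¹ ⊗[k] H α⁻¹)).symm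
            (TensorProduct.map LinearMap.id E
              (TensorProduct.map LinearMap.id
                ((Hc.comul (α⁻¹ * α) β).toLinearMap ∘ₗ castL k H h₃) t2))) := by
    have hcomp : TensorProduct.map LinearMap.id (Gm Hc α β) ∘ₗ (Hc.comul α⁻¹ (α*β)).toLinearMap
        = E ∘ₗ ((Hc.comul (α⁻¹ * α) β).toLinearMap ∘ₗ castL k H h₃) := by
      rw [JlemMap]
    rw [e2, map_map_apply, map_map_apply, hcomp]
  -- step 3 : collapse the middle pair using the antipode axiom
  set εa : H (α⁻¹ * α) →ₗ[k] k :=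
    Hc.counit.toLinearMap ∘ₗ castL k H (inv_mul_cancel α) with hεa
  set collapse : H (α⁻¹ * α) ⊗[k] H β →ₗ[k] H β :=
    (TensorProduct.lid k (H β)).toLinearMap ∘ₗ LinearMap.rTensor (H β) εa with hcollapse
  set ι : H β⁻¹ →ₗ[k] H β⁻¹ ⊗[k] H α⁻¹ := (TensorProduct.mk k (H β⁻¹) (H α⁻¹)).flip 1 with hι
  have Omega : ∀ w : H β⁻¹ ⊗[k] (H (α⁻¹ * α) ⊗[k] H β),
      LinearMap.mul' k (H β⁻¹ ⊗[k] H α⁻¹)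
          ((TensorProduct.assoc k (H β⁻¹) (H α⁻¹) (H β⁻¹ ⊗[k] H α⁻¹)).symm
            (TensorProduct.map LinearMap.id E w))
        = ι (LinearMap.mul' k (H β⁻¹)
            (TensorProduct.map LinearMap.id Sb
              (LinearMap.lTensor (H β⁻¹) collapse w))) := by
    intro w
    induction w using TensorProduct.induction_on with
    | zero => simp
    | add u v hu hv => simp only [map_add, hu, hv]
    | tmul b w2 =>
      induction w2 using TensorProduct.induction_on with
      | zero => simp
      | add u v hu hv => simp only [map_add, TensorProduct.tmul_add, hu, hv]
      | tmul p z =>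
        have sub : ∀ q : H α⁻¹ ⊗[k] H α,
            LinearMap.mul' k (H β⁻¹ ⊗[k] H α⁻¹)
                ((TensorProduct.assoc k (H β⁻¹) (H α⁻¹) (H β⁻¹ ⊗[k] H α⁻¹)).symm
                  (b ⊗ₜ[k] (TensorProduct.map LinearMap.id
                      ((TensorProduct.comm k (H α⁻¹) (H β⁻¹)).toLinearMap ∘ₗ
                        TensorProduct.map Sa Sb)
                    ((TensorProduct.assoc k (H α⁻¹) (H α) (H β)) (q ⊗ₜ[k] z)))))
              = (b * Sb z) ⊗ₜ[k]
                  (LinearMap.mul' k (H α⁻¹) (TensorProduct.map LinearMap.id Sa q)) := by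
          intro q
          induction q using TensorProduct.induction_on with
          | zero => simp
          | add u v hu hv =>
            simp only [map_add, TensorProduct.add_tmul, TensorProduct.tmul_add, hu, hv]
          | tmul r s =>
            simp only [TensorProduct.assoc_tmul, TensorProduct.map_tmul,
              LinearMap.id_coe, id_eq, LinearMap.comp_apply, LinearEquiv.coe_coe,
              TensorProduct.comm_tmul, TensorProduct.assoc_symm_tmul,
              LinearMap.mul'_apply, Algebra.TensorProduct.tmul_mul_tmul]
        have hEpz : TensorProduct.map LinearMap.id E (b ⊗ₜ[k] (p ⊗ₜ[k] z))
            = b ⊗ₜ[k] (TensorProduct.map LinearMap.id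
                  ((TensorProduct.comm k (H α⁻¹) (H β⁻¹)).toLinearMap ∘ₗ
                    TensorProduct.map Sa Sb)
                ((TensorProduct.assoc k (H α⁻¹) (H α) (H β))
                  ((Hc.comul α⁻¹ α p) ⊗ₜ[k] z))) := by
          simp only [hE, TensorProduct.map_tmul, LinearMap.id_coe, id_eq,
            LinearMap.comp_apply, LinearEquiv.coe_coe, AlgHom.toLinearMap_apply]
        rw [hEpz, sub (Hc.comul α⁻¹ α p), L2]
        simp [hι, hcollapse, hεa, LinearMap.mul'_apply, TensorProduct.tmul_smul,
          TensorProduct.smul_tmul', mul_smul_comm, smul_mul_assoc]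
  rw [e3, Omega]
  -- step 4 : collapse the counit
  have colK : collapse ∘ₗ ((Hc.comul (α⁻¹ * α) β).toLinearMap ∘ₗ castL k H h₃)
      = castL k H h₆ := by
    ext v
    have := counit_left' Hc (inv_mul_cancel α) (by group : (α⁻¹ * α) * β = β)
      (castL k H h₃ v)
    simp only [LinearMap.comp_apply, hcollapse, hεa, LinearEquiv.coe_coe, AlgHom.toLinearMap_apply]
    rw [this, castL_castL, Subsingleton.elim (h₃.trans (by group)) h₆]
  have e5 : LinearMap.lTensor (H β⁻¹) collapse
        (TensorProduct.map LinearMap.id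
          ((Hc.comul (α⁻¹ * α) β).toLinearMap ∘ₗ castL k H h₃) t2)
      = TensorProduct.map LinearMap.id (castL k H h₆) t2 := by
    rw [show LinearMap.lTensor (H β⁻¹) collapse
        = TensorProduct.map LinearMap.id collapse from rfl, map_map_apply, colK]
    rfl
  rw [e5]
  -- step 5 : shift the cast through the comultiplication and finish with L2 β
  have shift : TensorProduct.map LinearMap.id (castL k H h₆) t2
      = Hc.comul β⁻¹ β (castL k H h₇ x) := by
    have hc := comul_castL Hc rfl h₆ (by group : β⁻¹ * (α⁻¹ * (α * β)) = β⁻¹ * β)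
      (castL k H (h₁.trans (mul_assoc β⁻¹ α⁻¹ (α * β))) x)
    rw [castL_eq_id, castL_castL] at hc
    rw [ht2, ← hc]
  rw [shift, L2, castL_castL]
  simp only [hι, map_smul, LinearMap.flip_apply, TensorProduct.mk_apply, eL,
    LinearMap.comp_apply, Algebra.linearMap_apply, AlgHom.toLinearMap_apply,
    Algebra.algebraMap_eq_smul_one, Algebra.TensorProduct.one_def,
    Subsingleton.elim (h₇.trans (inv_mul_cancel β)) (inv_mul_cancel (α * β))]

end Claim2
section Final
variable {k : Type} [Field k] {π : Type} [Group π] {H : π → Type}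
  [∀ α, Ring (H α)] [∀ α, Algebra k (H α)] (Hc : HopfGrpCoalg k π H)

lemma part1 (x : H (1:π)) :
    Hc.counit (castL k H inv_one (Hc.antipode 1 x)) = Hc.counit x := by
  set φL : H ((1:π))⁻¹ →ₗ[k] k := Hc.counit.toLinearMap ∘ₗ castL k H inv_one with hφ
  have q : (1:π) = 1⁻¹ * 1 := by group
  set y := castL k H q x with hy
  have M : ∀ t : H ((1:π)⁻¹) ⊗[k] H (1:π),
      φL (LinearMap.mul' k (H ((1:π))⁻¹)
          (TensorProduct.map LinearMap.id (Hc.antipode 1) t))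
        = φL (Hc.antipode 1 ((TensorProduct.lid k (H (1:π)))
            (LinearMap.rTensor (H (1:π)) φL t))) := by
    intro t
    induction t using TensorProduct.induction_on with
    | zero => simp
    | add u v hu hv => simp only [map_add, hu, hv]
    | tmul a b =>
      simp only [TensorProduct.map_tmul, LinearMap.mul'_apply, LinearMap.id_coe, id_eq,
        LinearMap.rTensor_tmul, TensorProduct.lid_tmul, map_smul, hφ, LinearMap.comp_apply,
        AlgHom.toLinearMap_apply, castL_mul, map_mul, smul_eq_mul]
  have h1 := congrArg φL (L2 Hc 1 y)
  rw [M (Hc.comul 1⁻¹ 1 y)] at h1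
  have hcl := counit_left' Hc inv_one (by group : (1:π)⁻¹ * 1 = 1) y
  rw [← hφ] at hcl
  rw [hcl] at h1
  rw [hy] at h1
  simp only [castL_castL, castL_self] at h1
  have hone : φL 1 = 1 := by
    rw [hφ]
    simp only [LinearMap.comp_apply, castL_one, AlgHom.toLinearMap_apply, map_one]
  rw [map_smul, hone, smul_eq_mul, mul_one, hφ] at h1
  simpa only [LinearMap.comp_apply, AlgHom.toLinearMap_apply] using h1

theorem antipode_anti_comul' (α β : π) (x : H (α * β)) :
    Hc.comul β⁻¹ α⁻¹ (castL k H (mul_inv_rev α β) (Hc.antipode (α * β) x))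
      = (TensorProduct.comm k (H α⁻¹) (H β⁻¹))
          (TensorProduct.map (Hc.antipode α) (Hc.antipode β) (Hc.comul α β x)) := by
  have p : α * β = (α * β) * (α * β)⁻¹ * (α * β) := by group
  have h2 : ((α * β) * (α * β)⁻¹) * (α * β) = 1 * (α * β) := by group
  have cFD : conv Hc (α * β) (α * β)⁻¹ (Fm Hc α β) (Dm Hc α β)
      = eL Hc (H β⁻¹ ⊗[k] H α⁻¹) ∘ₗ castL k H (mul_inv_cancel (α * β)) :=
    LinearMap.ext fun z => claim1 Hc α β z
  have cDG : eL Hc (H β⁻¹ ⊗[k] H α⁻¹)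
      = conv Hc (α * β)⁻¹ (α * β) (Dm Hc α β) (Gm Hc α β) ∘ₗ
          castL k H (inv_mul_cancel (α * β)).symm :=
    LinearMap.ext fun z => by
      rw [LinearMap.comp_apply, claim2, castL_castL, castL_self]
  have key : Fm Hc α β x = Gm Hc α β x := by
    have assocStep := conv_assoc Hc (Fm Hc α β) (Dm Hc α β) (Gm Hc α β)
      (castL k H p x)
    rw [castL_castL] at assocStep
    calc Fm Hc α β x
        = conv Hc (α * β) 1 (Fm Hc α β) (eL Hc (H β⁻¹ ⊗[k] H α⁻¹))
            (castL k H (mul_one (α * β)).symm x) := by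
          rw [conv_eL_right, castL_castL, castL_self]
      _ = conv Hc (α * β) 1 (Fm Hc α β)
            (conv Hc (α * β)⁻¹ (α * β) (Dm Hc α β) (Gm Hc α β) ∘ₗ
              castL k H (inv_mul_cancel (α * β)).symm)
            (castL k H (mul_one (α * β)).symm x) := by rw [cDG]
      _ = conv Hc (α * β) ((α * β)⁻¹ * (α * β)) (Fm Hc α β)
            (conv Hc (α * β)⁻¹ (α * β) (Dm Hc α β) (Gm Hc α β))
            (castL k H (by group : (α * β) * 1 = (α * β) * ((α * β)⁻¹ * (α * β)))
              (castL k H (mul_one (α * β)).symm x)) :=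
          (conv_castL_right Hc (inv_mul_cancel (α * β)).symm _ _ _ _).symm
      _ = conv Hc (α * β) ((α * β)⁻¹ * (α * β)) (Fm Hc α β)
            (conv Hc (α * β)⁻¹ (α * β) (Dm Hc α β) (Gm Hc α β))
            (castL k H (p.trans (mul_assoc (α * β) (α * β)⁻¹ (α * β))) x) := by
          rw [castL_castL]
      _ = conv Hc ((α * β) * (α * β)⁻¹) (α * β)
            (conv Hc (α * β) (α * β)⁻¹ (Fm Hc α β) (Dm Hc α β)) (Gm Hc α β)
            (castL k H p x) := assocStep.symm
      _ = conv Hc ((α * β) * (α * β)⁻¹) (α * β)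
            (eL Hc (H β⁻¹ ⊗[k] H α⁻¹) ∘ₗ castL k H (mul_inv_cancel (α * β)))
            (Gm Hc α β) (castL k H p x) := by rw [cFD]
      _ = conv Hc 1 (α * β) (eL Hc (H β⁻¹ ⊗[k] H α⁻¹)) (Gm Hc α β)
            (castL k H h2 (castL k H p x)) :=
          (conv_castL_left Hc (mul_inv_cancel (α * β)) h2 _ _ _).symm
      _ = Gm Hc α β (castL k H (one_mul (α * β)) (castL k H h2 (castL k H p x))) :=
          conv_eL_left Hc _ _
      _ = Gm Hc α β x := by rw [castL_castL, castL_castL, castL_self]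
  exact key

end Final

/-- The antipode of a Hopf `π`-coalgebra is anti-comultiplicative: `ε ∘ S₁ = ε` and
`Δ_{β⁻¹,α⁻¹} ∘ S_{αβ} = flip ∘ (S_α ⊗ S_β) ∘ Δ_{α,β}`. -/
theorem antipode_anti_comul (k : Type) [Field k] (π : Type) [Group π] (H : π → Type)
    [∀ α, Ring (H α)] [∀ α, Algebra k (H α)] (Hc : HopfGrpCoalg k π H) :
    (∀ x : H 1, Hc.counit (castL k H inv_one (Hc.antipode 1 x)) = Hc.counit x) ∧
    (∀ (α β : π) (x : H (α * β)),
      Hc.comul β⁻¹ α⁻¹ (castL k H (mul_inv_rev α β) (Hc.antipode (α * β) x))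
        = (TensorProduct.comm k (H α⁻¹) (H β⁻¹))
            (TensorProduct.map (Hc.antipode α) (Hc.antipode β) (Hc.comul α β x))) := by
  exact ⟨fun x => part1 Hc x, fun α β x => antipode_anti_comul' Hc α β x⟩
end

section
/- Let G be a finite group and k a field. For α ∈ G, let D_α(G) be the vector space k[G] ⊗ F(G) (F(G) the algebra of functions G → k with basis e_g) with product (g ⊗ e_h)·(g' ⊗ e_{h'}) = δ_{αg'α⁻¹, h⁻¹ g' h'} · (gg' ⊗ e_{h'}) extended bilinearly, and unit Σ_{g∈G} 1 ⊗ e_g. Then D_α(G) is an associative unital algebra. -/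
/-- The twisted double algebra `D_α(G) = k[G] ⊗ F(G)`, identified with functions
`G → G → k` via the basis `(g ⊗ e_h)`. The product is the bilinear extension of
`(g ⊗ e_h)·(g' ⊗ e_{h'}) = δ_{α g' α⁻¹, h⁻¹ g' h'} (g g' ⊗ e_{h'})`. -/
noncomputable def Dmul {G : Type} [Group G] [Fintype G] [DecidableEq G] (k : Type) [Field k]
    (α : G) (f f' : G → G → k) : G → G → k :=
  fun c h' => ∑ g : G, ∑ g' : G, ∑ h : G,
    if g * g' = c ∧ α * g' * α⁻¹ = h⁻¹ * g' * h' then f g h * f' g' h' else 0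

/-- The unit `Σ_{g∈G} 1 ⊗ e_g` of `D_α(G)`, as a function `G → G → k`. -/
def Done {G : Type} [Group G] [DecidableEq G] (k : Type) [Field k] : G → G → k :=
  fun g _ => if g = 1 then 1 else 0

/-- Closed form for the product: the conditions in the defining sum fix `g` and `h`
uniquely in terms of `g'`, `c`, `h'`. -/
lemma Dmul_eq {G : Type} [Group G] [Fintype G] [DecidableEq G] (k : Type) [Field k]
    (α : G) (f f' : G → G → k) (c h' : G) :
    Dmul k α f f' c h' =
      ∑ g' : G, f (c * g'⁻¹) (g' * h' * (α * g' * α⁻¹)⁻¹) * f' g' h' := by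
  unfold Dmul
  rw [Finset.sum_comm]
  refine Finset.sum_congr rfl fun g' _ => ?_
  have key : ∀ g h : G, (g * g' = c ∧ α * g' * α⁻¹ = h⁻¹ * g' * h') ↔
      (g = c * g'⁻¹ ∧ h = g' * h' * (α * g' * α⁻¹)⁻¹) := by
    intro g h
    constructor
    · rintro ⟨h1, h2⟩
      refine ⟨by rw [← h1]; group, by rw [h2]; group⟩
    · rintro ⟨rfl, rfl⟩
      exact ⟨by group, by group⟩
  simp only [key]
  simp [ite_and, Finset.sum_ite_eq']

/-- For a finite group `G`, the twisted double `D_α(G)` is an associative unital algebra. -/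
theorem D_assoc_unital {G : Type} [Group G] [Fintype G] [DecidableEq G] (k : Type) [Field k]
    (α : G) :
    (∀ f₁ f₂ f₃ : G → G → k, Dmul k α (Dmul k α f₁ f₂) f₃ = Dmul k α f₁ (Dmul k α f₂ f₃)) ∧
    (∀ f : G → G → k, Dmul k α (Done k) f = f ∧ Dmul k α f (Done k) = f) := by
  constructor
  · intro f₁ f₂ f₃
    funext c h'
    simp only [Dmul_eq, Finset.sum_mul, Finset.mul_sum]
    conv_rhs => rw [Finset.sum_comm]
    refine Finset.sum_congr rfl fun g3 _ => ?_
    refine Fintype.sum_equiv (Equiv.mulRight g3) _ _ fun g2 => ?_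
    simp only [Equiv.coe_mulRight]
    have e1 : c * g3⁻¹ * g2⁻¹ = c * (g2 * g3)⁻¹ := by group
    have e2 : g2 * (g3 * h' * (α * g3 * α⁻¹)⁻¹) * (α * g2 * α⁻¹)⁻¹
        = g2 * g3 * h' * (α * (g2 * g3) * α⁻¹)⁻¹ := by group
    have e3 : g2 * g3 * g3⁻¹ = g2 := by group
    rw [e1, e2, e3, mul_assoc]
  · intro f
    constructor
    · funext c h'
      simp only [Dmul_eq, Done]
      rw [Finset.sum_eq_single c]
      · simp
      · intro g' _ hne
        simp [mul_inv_eq_one, Ne.symm hne]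
      · simp
    · funext c h'
      simp only [Dmul_eq, Done]
      rw [Finset.sum_eq_single 1]
      · simp
      · intro g' _ hne; simp [hne]
      · simp
end

section
/- Let G be a finite group, k a field, and for each α ∈ G define θ_α = Σ_{g∈G} α⁻¹gα ⊗ e_g in the algebra D_α(G) (with product (g ⊗ e_h)·(g' ⊗ e_{h'}) = δ_{αg'α⁻¹, h⁻¹g'h'} gg' ⊗ e_{h'}). Then for every integer n ≥ 0, θ_α^n = Σ_{g∈G} α^{-n}(gα)^n ⊗ e_g; in particular θ_α is invertible with θ_α^{-1} = Σ_{g∈G} α(gα)^{-1} ⊗ e_g. -/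
lemma delta_mul {G : Type} [Group G] [Fintype G] [DecidableEq G] (k : Type) [Field k]
    (α : G) (u v : G → G) :
    Dmul k α (fun c h => if c = u h then (1:k) else 0) (fun c h => if c = v h then 1 else 0)
    = fun c h' => if c = u (v h' * h' * α * (v h')⁻¹ * α⁻¹) * v h' then 1 else 0 := by
  funext c h'
  unfold Dmul
  have key : ∀ g g' h : G,
      ((g * g' = c ∧ α * g' * α⁻¹ = h⁻¹ * g' * h') ∧ g = u h ∧ g' = v h')
      ↔ (g' = v h' ∧ h = v h' * h' * α * (v h')⁻¹ * α⁻¹ ∧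
          g = u (v h' * h' * α * (v h')⁻¹ * α⁻¹) ∧
          c = u (v h' * h' * α * (v h')⁻¹ * α⁻¹) * v h') := by
    intro g g' h
    constructor
    · rintro ⟨⟨rfl, h2⟩, rfl, rfl⟩
      have hh : h = v h' * h' * α * (v h')⁻¹ * α⁻¹ := by
        have e1 : h * (α * v h' * α⁻¹) = v h' * h' := by rw [h2]; group
        apply mul_right_cancel (b := α * v h' * α⁻¹)
        rw [e1]; group
      exact ⟨rfl, hh, by rw [hh], by rw [hh]⟩
    · rintro ⟨rfl, rfl, rfl, rfl⟩
      refine ⟨⟨rfl, ?_⟩, rfl, rfl⟩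
      group
  have keq : ∀ g g' h : G,
      (if g * g' = c ∧ α * g' * α⁻¹ = h⁻¹ * g' * h' then
        (if g = u h then (1:k) else 0) * (if g' = v h' then 1 else 0) else 0)
      = if (g' = v h' ∧ h = v h' * h' * α * (v h')⁻¹ * α⁻¹ ∧
          g = u (v h' * h' * α * (v h')⁻¹ * α⁻¹) ∧
          c = u (v h' * h' * α * (v h')⁻¹ * α⁻¹) * v h') then 1 else 0 := by
    intro g g' h
    by_cases H : (g * g' = c ∧ α * g' * α⁻¹ = h⁻¹ * g' * h') ∧ g = u h ∧ g' = v h'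
    · rw [if_pos ((key g g' h).1 H), if_pos H.1, if_pos H.2.1, if_pos H.2.2, one_mul]
    · rw [if_neg (fun H' => H ((key g g' h).2 H'))]
      by_cases H1 : g * g' = c ∧ α * g' * α⁻¹ = h⁻¹ * g' * h'
      · rw [if_pos H1]
        by_cases H2 : g = u h
        · rw [if_pos H2, if_neg (fun H3 => H ⟨H1, H2, H3⟩), one_mul]
        · rw [if_neg H2, zero_mul]
      · rw [if_neg H1]
  simp only [keq]
  simp [Finset.sum_ite_eq', ite_and]

/-- The twist `θ_α = Σ_{g∈G} α⁻¹ g α ⊗ e_g` of `D_α(G)`. -/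
def thetaD {G : Type} [Group G] [DecidableEq G] (k : Type) [Field k] (α : G) : G → G → k :=
  fun c h => if c = α⁻¹ * h * α then 1 else 0

/-- Powers `θ_α^n` in the algebra `D_α(G)`. -/
noncomputable def powTheta {G : Type} [Group G] [Fintype G] [DecidableEq G] (k : Type) [Field k]
    (α : G) : ℕ → (G → G → k)
  | 0 => Done k
  | n + 1 => Dmul k α (thetaD k α) (powTheta k α n)

/-- `θ_α^n = Σ_{g∈G} α^{-n} (g α)^n ⊗ e_g` for all `n ≥ 0`; in particular `θ_α` is invertible
with inverse `Σ_{g∈G} α (g α)⁻¹ ⊗ e_g`. -/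
theorem theta_pow {G : Type} [Group G] [Fintype G] [DecidableEq G] (k : Type) [Field k]
    (α : G) :
    (∀ n : ℕ, powTheta k α n
      = fun c h => if c = (α ^ n)⁻¹ * (h * α) ^ n then (1 : k) else 0) ∧
    (Dmul k α (thetaD k α) (fun c h => if c = α * (h * α)⁻¹ then (1 : k) else 0) = Done k ∧
     Dmul k α (fun c h => if c = α * (h * α)⁻¹ then (1 : k) else 0) (thetaD k α) = Done k) := by
  refine ⟨?_, ?_, ?_⟩
  · intro n
    induction n with
    | zero => funext c h; simp [powTheta, Done]
    | succ n ih =>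
      show Dmul k α (thetaD k α) (powTheta k α n) = _
      rw [ih]
      refine (delta_mul k α (fun h => α⁻¹ * h * α)
        (fun h => (α ^ n)⁻¹ * (h * α) ^ n)).trans ?_
      funext c h
      have hAB : α⁻¹ * ((α ^ n)⁻¹ * (h * α) ^ n * h * α * ((α ^ n)⁻¹ * (h * α) ^ n)⁻¹ * α⁻¹) * α
            * ((α ^ n)⁻¹ * (h * α) ^ n)
          = (α ^ (n + 1))⁻¹ * (h * α) ^ (n + 1) := by
        rw [pow_succ, pow_succ]; group
      rw [hAB]
  · refine (delta_mul k α (fun h => α⁻¹ * h * α) (fun h => α * (h * α)⁻¹)).trans ?_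
    funext c h
    have hAB : α⁻¹ * (α * (h * α)⁻¹ * h * α * (α * (h * α)⁻¹)⁻¹ * α⁻¹) * α * (α * (h * α)⁻¹)
        = 1 := by group
    rw [hAB]; rfl
  · refine (delta_mul k α (fun h => α * (h * α)⁻¹) (fun h => α⁻¹ * h * α)).trans ?_
    funext c h
    have hAB : α * ((α⁻¹ * h * α * h * α * (α⁻¹ * h * α)⁻¹ * α⁻¹) * α)⁻¹ * (α⁻¹ * h * α)
        = 1 := by group
    rw [hAB]; rfl
end

section
/- Let k be a field of characteristic ≠ 2, A_n the Hopf algebra generated by g, x_1,…,x_n with g² = 1, x_i² = 0, gx_i = −x_ig, x_ix_j = −x_jx_i, Δ(g) = g⊗g, Δ(x_i) = x_i⊗g + 1⊗x_i, and B_n = A_n^cop its co-opposite with generators h, y_1,…,y_n. Then the unique Hopf pairing σ: A_n × B_n → k with σ(g,h) = −1, σ(g,y_j) = σ(x_i,h) = 0, σ(x_i,y_j) = δ_{ij} satisfies σ(g^k x_S, h^l y_T) = (−1)^{kl} δ_{S,T} for all k,l ∈ {0,1} and subsets S, T ⊆ {1,…,n} (where x_S, y_S denote ordered products over S), and consequently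 σ is non-degenerate. -/
open TensorProduct Coalgebra

/-- A Hopf pairing between two Hopf algebras `A` and `B` over a field `k`: a bilinear map
`σ : A × B → k` satisfying `σ(a, bb') = σ(a₍₁₎, b) σ(a₍₂₎, b')`,
`σ(aa', b) = σ(a, b₍₂₎) σ(a', b₍₁₎)`, `σ(a, 1) = ε(a)` and `σ(1, b) = ε(b)`. -/
structure HopfPairing (k A B : Type) [Field k] [Ring A] [HopfAlgebra k A]
    [Ring B] [HopfAlgebra k B] where
  σ : A →ₗ[k] B →ₗ[k] k
  pair_mul_right : ∀ (a : A) (b b' : B),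
    σ a (b * b') = LinearMap.mul' k k (TensorProduct.map (σ.flip b) (σ.flip b') (comul (R := k) a))
  pair_mul_left : ∀ (a a' : A) (b : B),
    σ (a * a') b = LinearMap.mul' k k (TensorProduct.map (σ a') (σ a) (comul (R := k) b))
  pair_one_right : ∀ a : A, σ a 1 = counit (R := k) a
  pair_one_left : ∀ b : B, σ 1 b = counit (R := k) b

/-!
Right multiplication by `z ∈ B` is adjoint, under `σ`, to the contraction `a ↦ σ(a₍₂₎, z) a₍₁₎`
of `A`, and left multiplication by `w ∈ A` to the contraction `b ↦ σ(w, b₍₁₎) b₍₂₎` of `B`.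
Since `x_i` and `y_j` are skew-primitive, the contraction `D_j` by `y_j` is a skew derivation of
`A`, `D_j(u x_i) = δ_{ij} u - D_j(u) x_i`, and kills `1` and `g`; symmetrically for the
contraction by `x_j` on `B`. Peeling the largest index `j` of `S ∪ T` off whichever of `x_S`, `y_T` ends in
it either kills the pairing (when `j` lies in only one of `S`, `T`) or reduces it to
`S \ {j}`, `T \ {j}`, down to `σ(g^k, h^l) = (-1)^{kl}`. In these bases the Gram matrix of `σ`
is the Kronecker product of `[[1, 1], [1, -1]]`, of determinant `-2`, with the identity.
-/

theorem List.apply_mul_prod_map_eq_zero {R ι : Type*} [Ring R] (D : R → R) (x : ι → R)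
    {L : List ι} (hD : ∀ i ∈ L, ∀ u, D (u * x i) = -(D u * x i)) {c : R} (hc : D c = 0) :
    D (c * (L.map x).prod) = 0 := by
  induction L generalizing c with
  | nil => simpa using hc
  | cons i L ih =>
    rw [List.map_cons, List.prod_cons, ← mul_assoc]
    exact ih (fun j hj => hD j (List.mem_cons_of_mem i hj))
      (by simp [hD i List.mem_cons_self, hc])

def Finset.orderedProd {ι M : Type*} [LinearOrder ι] [Monoid M] (S : Finset ι) (x : ι → M) :
    M :=
  ((S.sort (· ≤ ·)).map x).prod

theorem Finset.sort_insert_of_forall_lt {ι : Type*} [LinearOrder ι] {S : Finset ι} {j : ι}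
    (hj : ∀ i ∈ S, i < j) : (insert j S).sort (· ≤ ·) = S.sort (· ≤ ·) ++ [j] := by
  have hjS : j ∉ S := fun h => lt_irrefl j (hj j h)
  refine List.Perm.eq_of_pairwise' (Finset.pairwise_sort _ _) ?_ ?_
  · simpa [List.pairwise_append] using fun i hi => (hj i hi).le
  · refine (List.perm_ext_iff_of_nodup (Finset.sort_nodup _ _) ?_).mpr fun i => by simp [or_comm]
    simpa [List.nodup_append] using hjS

theorem Finset.orderedProd_eq_orderedProd_erase_mul {ι M : Type*} [LinearOrder ι] [Monoid M]
    {S : Finset ι} {j : ι} (hj : j ∈ S) (hmax : ∀ i ∈ S, i ≤ j) (x : ι → M) :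
    S.orderedProd x = (S.erase j).orderedProd x * x j := by
  have hlt : ∀ i ∈ S.erase j, i < j := fun i hi =>
    (hmax i (Finset.mem_of_mem_erase hi)).lt_of_ne (Finset.ne_of_mem_erase hi)
  conv_lhs => rw [← Finset.insert_erase hj]
  simp [orderedProd, Finset.sort_insert_of_forall_lt hlt]

open scoped Kronecker in
theorem LinearMap.nondegenerate_of_pair_basis_eq_kronecker_one {R M₁ M₂ m ι : Type*}
    [CommRing R] [IsDomain R] [AddCommGroup M₁] [Module R M₁] [AddCommGroup M₂] [Module R M₂]
    [Fintype m] [DecidableEq m] [Fintype ι] [DecidableEq ι]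
    (b₁ : Module.Basis (m × ι) R M₁) (b₂ : Module.Basis (m × ι) R M₂) {σ : M₁ →ₗ[R] M₂ →ₗ[R] R}
    {J : Matrix m m R} (hJ : J.det ≠ 0)
    (hσ : ∀ q q', σ (b₁ q) (b₂ q') = if q.2 = q'.2 then J q.1 q'.1 else 0) :
    σ.Nondegenerate := by
  have hM : LinearMap.toMatrix₂ b₁ b₂ σ = J ⊗ₖ 1 := by
    ext ⟨i, S⟩ ⟨j, T⟩
    simp [LinearMap.toMatrix₂_apply, hσ, Matrix.one_apply]
  rw [← LinearMap.nondegenerate_toMatrix₂_iff b₁ b₂, hM, Matrix.nondegenerate_iff_det_ne_zero,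
    Matrix.det_kronecker, Matrix.det_one, one_pow, mul_one]
  exact pow_ne_zero _ hJ

namespace HopfPairing

variable {k A B : Type} [Field k] [Ring A] [HopfAlgebra k A] [Ring B] [HopfAlgebra k B]
  (p : HopfPairing k A B)

noncomputable def contractRight : B →ₗ[k] A →ₗ[k] A :=
  LinearMap.lcomp k A comul ∘ₗ
    LinearMap.llcomp k (A ⊗[k] A) (A ⊗[k] k) A (TensorProduct.rid k A) ∘ₗ
      LinearMap.lTensorHom A ∘ₗ p.σ.flip

noncomputable def contractLeft : A →ₗ[k] B →ₗ[k] B :=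
  LinearMap.lcomp k B comul ∘ₗ
    LinearMap.llcomp k (B ⊗[k] B) (k ⊗[k] B) B (TensorProduct.lid k B) ∘ₗ
      LinearMap.rTensorHom B ∘ₗ p.σ

theorem contractRight_apply (z : B) (a : A) :
    p.contractRight z a = TensorProduct.rid k A ((p.σ.flip z).lTensor A (comul a)) := rfl

theorem contractLeft_apply (w : A) (b : B) :
    p.contractLeft w b = TensorProduct.lid k B ((p.σ w).rTensor B (comul b)) := rfl

theorem pair_mul_right_eq_pair_contractRight (a : A) (b z : B) :
    p.σ a (b * z) = p.σ (p.contractRight z a) b := by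
  rw [p.pair_mul_right, contractRight_apply]
  induction comul (R := k) a using TensorProduct.induction_on with
  | zero => simp
  | tmul a₁ a₂ => simp [mul_comm]
  | add t₁ t₂ h₁ h₂ => simp only [map_add, LinearMap.add_apply, h₁, h₂]

theorem pair_mul_left_eq_pair_contractLeft (a w : A) (b : B) :
    p.σ (a * w) b = p.σ a (p.contractLeft w b) := by
  rw [p.pair_mul_left, contractLeft_apply]
  induction comul (R := k) b using TensorProduct.induction_on with
  | zero => simp
  | tmul b₁ b₂ => simp
  | add t₁ t₂ h₁ h₂ => simp only [map_add, h₁, h₂]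

@[simp] theorem contractRight_one_apply (a : A) : p.contractRight 1 a = a := by
  have : p.σ.flip 1 = counit := LinearMap.ext p.pair_one_right
  simp [contractRight_apply, this]

@[simp] theorem contractLeft_one_apply (b : B) : p.contractLeft 1 b = b := by
  have : p.σ 1 = counit := LinearMap.ext p.pair_one_left
  simp [contractLeft_apply, this]

theorem contractRight_of_comul_eq_tmul_self {u : A} (hu : comul (R := k) u = u ⊗ₜ u) (z : B) :
    p.contractRight z u = p.σ u z • u := by
  simp [contractRight_apply, hu]

theorem contractLeft_of_comul_eq_tmul_self {v : B} (hv : comul (R := k) v = v ⊗ₜ v) (w : A) :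
    p.contractLeft w v = p.σ w v • v := by
  simp [contractLeft_apply, hv]

@[simp] theorem contractRight_apply_one (z : B) :
    p.contractRight z 1 = counit (R := k) z • 1 := by
  rw [p.contractRight_of_comul_eq_tmul_self
    (by rw [Bialgebra.comul_one, Algebra.TensorProduct.one_def]), p.pair_one_left]

@[simp] theorem contractLeft_apply_one (w : A) :
    p.contractLeft w 1 = counit (R := k) w • 1 := by
  rw [p.contractLeft_of_comul_eq_tmul_self
    (by rw [Bialgebra.comul_one, Algebra.TensorProduct.one_def]), p.pair_one_right]

theorem contractRight_mul (z : B) (u v : A) :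
    p.contractRight z (u * v) = LinearMap.mul' k A (TensorProduct.map (p.contractRight.flip u)
      (p.contractRight.flip v) (TensorProduct.comm k B B (comul z))) := by
  let Φ : B →ₗ[k] A ⊗[k] A →ₗ[k] A :=
    LinearMap.llcomp k (A ⊗[k] A) (A ⊗[k] k) A (TensorProduct.rid k A) ∘ₗ
      LinearMap.lTensorHom A ∘ₗ p.σ.flip
  have key : ∀ s t : A ⊗[k] A, Φ z (s * t) = LinearMap.mul' k A
      (TensorProduct.map (Φ.flip s) (Φ.flip t) (TensorProduct.comm k B B (comul z))) := by
    intro s t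
    induction s using TensorProduct.induction_on with
    | zero => simp
    | add s₁ s₂ h₁ h₂ =>
      simp only [add_mul, map_add, h₁, h₂, TensorProduct.map_add_left, LinearMap.add_apply]
    | tmul a a' =>
      induction t using TensorProduct.induction_on with
      | zero => simp
      | add t₁ t₂ h₁ h₂ =>
        simp only [mul_add, map_add, h₁, h₂, TensorProduct.map_add_right, LinearMap.add_apply]
      | tmul b b' =>
        have hΦ : Φ z ((a * b) ⊗ₜ[k] (a' * b')) = p.σ (a' * b') z • (a * b) := by
          simp [Φ]
        rw [Algebra.TensorProduct.tmul_mul_tmul, hΦ, p.pair_mul_left]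
        induction comul (R := k) z using TensorProduct.induction_on with
        | zero => simp
        | add t₁ t₂ h₁ h₂ => simp only [map_add, add_smul, h₁, h₂]
        | tmul z₁ z₂ => simp [Φ, smul_smul, mul_comm]
  rw [contractRight_apply, Bialgebra.comul_mul]
  exact key _ _

theorem contractLeft_mul (w : A) (b b' : B) :
    p.contractLeft w (b * b') = LinearMap.mul' k B (TensorProduct.map (p.contractLeft.flip b)
      (p.contractLeft.flip b') (comul w)) := by
  let Ψ : A →ₗ[k] B ⊗[k] B →ₗ[k] B :=
    LinearMap.llcomp k (B ⊗[k] B) (k ⊗[k] B) B (TensorProduct.lid k B) ∘ₗ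
      LinearMap.rTensorHom B ∘ₗ p.σ
  have key : ∀ s t : B ⊗[k] B, Ψ w (s * t) =
      LinearMap.mul' k B (TensorProduct.map (Ψ.flip s) (Ψ.flip t) (comul w)) := by
    intro s t
    induction s using TensorProduct.induction_on with
    | zero => simp
    | add s₁ s₂ h₁ h₂ =>
      simp only [add_mul, map_add, h₁, h₂, TensorProduct.map_add_left, LinearMap.add_apply]
    | tmul b₁ b₂ =>
      induction t using TensorProduct.induction_on with
      | zero => simp
      | add t₁ t₂ h₁ h₂ =>
        simp only [mul_add, map_add, h₁, h₂, TensorProduct.map_add_right, LinearMap.add_apply]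
      | tmul b₁' b₂' =>
        have hΨ : Ψ w ((b₁ * b₁') ⊗ₜ[k] (b₂ * b₂')) = p.σ w (b₁ * b₁') • (b₂ * b₂') := by
          simp [Ψ]
        rw [Algebra.TensorProduct.tmul_mul_tmul, hΨ, p.pair_mul_right]
        induction comul (R := k) w using TensorProduct.induction_on with
        | zero => simp
        | add t₁ t₂ h₁ h₂ => simp only [map_add, add_smul, h₁, h₂]
        | tmul w₁ w₂ => simp [Ψ, smul_smul, mul_comm]
  rw [contractLeft_apply, Bialgebra.comul_mul]
  exact key _ _

section SkewPrimitive

variable {g x : A} {h y : B}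

theorem contractRight_of_comul_eq (hx : comul (R := k) x = x ⊗ₜ g + 1 ⊗ₜ x) (z : B) :
    p.contractRight z x = p.σ g z • x + p.σ x z • 1 := by
  simp [contractRight_apply, hx]

theorem contractLeft_of_comul_eq (hy : comul (R := k) y = y ⊗ₜ 1 + h ⊗ₜ y) (w : A) :
    p.contractLeft w y = p.σ w y • 1 + p.σ w h • y := by
  simp [contractLeft_apply, hy]

theorem contractRight_mul_of_comul_eq (hx : comul (R := k) x = x ⊗ₜ g + 1 ⊗ₜ x)
    (hy : comul (R := k) y = y ⊗ₜ 1 + h ⊗ₜ y) (hgy : p.σ g y = 0) (hgh : p.σ g h = -1)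
    (hxh : p.σ x h = 0) (u : A) :
    p.contractRight y (u * x) = p.σ x y • u - p.contractRight y u * x := by
  rw [contractRight_mul, hy]
  simp [p.contractRight_of_comul_eq hx, hgy, hgh, hxh, sub_eq_add_neg, add_comm]

theorem contractLeft_mul_of_comul_eq (hx : comul (R := k) x = x ⊗ₜ g + 1 ⊗ₜ x)
    (hy : comul (R := k) y = y ⊗ₜ 1 + h ⊗ₜ y) (hgy : p.σ g y = 0) (hgh : p.σ g h = -1)
    (hxh : p.σ x h = 0) (v : B) :
    p.contractLeft x (v * y) = p.σ x y • v - p.contractLeft x v * y := by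
  rw [contractLeft_mul, hx]
  simp [p.contractLeft_of_comul_eq hy, hgy, hgh, hxh, sub_eq_add_neg, add_comm]

end SkewPrimitive

section OrderedProd

variable {ι : Type*} [LinearOrder ι] {x : ι → A} {y : ι → B}

theorem contractRight_mul_orderedProd_eq_zero {z : B}
    (hx : ∀ i u, p.contractRight z (u * x i) = p.σ (x i) z • u - p.contractRight z u * x i)
    {S : Finset ι} (hS : ∀ i ∈ S, p.σ (x i) z = 0) {c : A} (hc : p.contractRight z c = 0) :
    p.contractRight z (c * S.orderedProd x) = 0 :=
  List.apply_mul_prod_map_eq_zero _ _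
    (fun i hi u => by rw [hx, hS i ((S.mem_sort _).mp hi), zero_smul, zero_sub]) hc

theorem contractLeft_mul_orderedProd_eq_zero {w : A}
    (hy : ∀ i v, p.contractLeft w (v * y i) = p.σ w (y i) • v - p.contractLeft w v * y i)
    {T : Finset ι} (hT : ∀ i ∈ T, p.σ w (y i) = 0) {d : B} (hd : p.contractLeft w d = 0) :
    p.contractLeft w (d * T.orderedProd y) = 0 :=
  List.apply_mul_prod_map_eq_zero _ _
    (fun i hi v => by rw [hy, hT i ((T.mem_sort _).mp hi), zero_smul, zero_sub]) hd

theorem pair_mul_orderedProd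
    (hx : ∀ i j u, p.contractRight (y j) (u * x i) =
      p.σ (x i) (y j) • u - p.contractRight (y j) u * x i)
    (hy : ∀ i j v, p.contractLeft (x j) (v * y i) =
      p.σ (x j) (y i) • v - p.contractLeft (x j) v * y i)
    (hxy : ∀ i j, p.σ (x i) (y j) = if i = j then 1 else 0)
    {c : A} {d : B} (hc : ∀ j, p.contractRight (y j) c = 0)
    (hd : ∀ j, p.contractLeft (x j) d = 0) (S T : Finset ι) :
    p.σ (c * S.orderedProd x) (d * T.orderedProd y) = if S = T then p.σ c d else 0 := by
  have hcS : ∀ (j : ι) (S : Finset ι), j ∉ S →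
      p.contractRight (y j) (c * S.orderedProd x) = 0 := fun j S hj =>
    p.contractRight_mul_orderedProd_eq_zero (hx · j)
      (fun i hi => by rw [hxy, if_neg (by rintro rfl; exact hj hi)]) (hc j)
  have hdT : ∀ (j : ι) (T : Finset ι), j ∉ T →
      p.contractLeft (x j) (d * T.orderedProd y) = 0 := fun j T hj =>
    p.contractLeft_mul_orderedProd_eq_zero (hy · j)
      (fun i hi => by rw [hxy, if_neg (by rintro rfl; exact hj hi)]) (hd j)
  suffices ∀ U S T : Finset ι, S ∪ T = U →
      p.σ (c * S.orderedProd x) (d * T.orderedProd y) = if S = T then p.σ c d else 0 from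
    this _ S T rfl
  intro U
  induction U using Finset.induction_on_max with
  | empty =>
    intro S T hST
    obtain ⟨rfl, rfl⟩ := Finset.union_eq_empty.mp hST
    simp [Finset.orderedProd]
  | insert j U hj ih =>
    intro S T hST
    have hle : ∀ i ∈ S ∪ T, i ≤ j := fun i hi => by
      rcases Finset.mem_insert.mp (hST ▸ hi) with rfl | hi
      exacts [le_rfl, (hj i hi).le]
    have hU : S.erase j ∪ T.erase j = U := by
      rw [← Finset.erase_union_distrib, hST, Finset.erase_insert fun h => (hj j h).false]
    by_cases hjT : j ∈ T
    · rw [T.orderedProd_eq_orderedProd_erase_mul hjT (fun i hi => hle i (by simp [hi])),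
        ← mul_assoc, pair_mul_right_eq_pair_contractRight]
      by_cases hjS : j ∈ S
      · rw [S.orderedProd_eq_orderedProd_erase_mul hjS (fun i hi => hle i (by simp [hi])),
          ← mul_assoc, hx, hcS j _ (S.notMem_erase j), hxy, if_pos rfl, one_smul, zero_mul,
          sub_zero, ih _ _ hU]
        exact if_congr ((Finset.erase_injOn' j).eq_iff hjS hjT) rfl rfl
      · rw [hcS j S hjS, map_zero, LinearMap.zero_apply, if_neg (by rintro rfl; exact hjS hjT)]
    · have hjS : j ∈ S := by
        have : j ∈ S ∪ T := by rw [hST]; exact Finset.mem_insert_self j U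
        exact (Finset.mem_union.mp this).resolve_right hjT
      rw [S.orderedProd_eq_orderedProd_erase_mul hjS (fun i hi => hle i (by simp [hi])),
        ← mul_assoc, pair_mul_left_eq_pair_contractLeft, hdT j T hjT, map_zero,
        if_neg (by rintro rfl; exact hjT hjS)]

end OrderedProd

end HopfPairing

theorem An_pairing_basis_general (k : Type) [Field k] (htwo : (2 : k) ≠ 0) (n : ℕ)
    (A B : Type) [Ring A] [HopfAlgebra k A] [Ring B] [HopfAlgebra k B]
    (g : A) (x : Fin n → A) (h : B) (y : Fin n → B)
    -- relations in A_n
    (hcg : Coalgebra.comul (R := k) g = g ⊗ₜ[k] g)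
    (hcx : ∀ i, Coalgebra.comul (R := k) (x i) = x i ⊗ₜ[k] g + (1 : A) ⊗ₜ[k] x i)
    (heg : Coalgebra.counit (R := k) g = 1) (hex : ∀ i, Coalgebra.counit (R := k) (x i) = 0)
    -- relations in B_n = A_n^cop
    (hch : Coalgebra.comul (R := k) h = h ⊗ₜ[k] h)
    (hcy : ∀ i, Coalgebra.comul (R := k) (y i) = y i ⊗ₜ[k] (1 : B) + h ⊗ₜ[k] y i)
    (heh : Coalgebra.counit (R := k) h = 1) (hey : ∀ i, Coalgebra.counit (R := k) (y i) = 0)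
    -- the Hopf pairing and its values on generators
    (p : HopfPairing k A B)
    (hσgh : p.σ g h = -1) (hσgy : ∀ j, p.σ g (y j) = 0) (hσxh : ∀ i, p.σ (x i) h = 0)
    (hσxy : ∀ i j, p.σ (x i) (y j) = if i = j then 1 else 0)
    -- the monomials g^k x_S and h^l y_T form bases
    (bA : Module.Basis (Bool × Finset (Fin n)) k A)
    (hbA : ∀ q : Bool × Finset (Fin n),
      bA q = (if q.1 then g else 1) * ((q.2.sort (· ≤ ·)).map x).prod)
    (bB : Module.Basis (Bool × Finset (Fin n)) k B)
    (hbB : ∀ q : Bool × Finset (Fin n),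
      bB q = (if q.1 then h else 1) * ((q.2.sort (· ≤ ·)).map y).prod) :
    (∀ (kk ll : Bool) (S T : Finset (Fin n)),
      p.σ ((if kk then g else 1) * ((S.sort (· ≤ ·)).map x).prod)
          ((if ll then h else 1) * ((T.sort (· ≤ ·)).map y).prod)
        = if S = T then (if kk ∧ ll then (-1 : k) else 1) else 0) ∧
    (∀ a : A, (∀ b : B, p.σ a b = 0) → a = 0) ∧
    (∀ b : B, (∀ a : A, p.σ a b = 0) → b = 0) := by
  have hx : ∀ i j u, p.contractRight (y j) (u * x i) =
      p.σ (x i) (y j) • u - p.contractRight (y j) u * x i := fun i j =>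
    p.contractRight_mul_of_comul_eq (hcx i) (hcy j) (hσgy j) hσgh (hσxh i)
  have hy : ∀ i j v, p.contractLeft (x j) (v * y i) =
      p.σ (x j) (y i) • v - p.contractLeft (x j) v * y i := fun i j =>
    p.contractLeft_mul_of_comul_eq (hcx j) (hcy i) (hσgy i) hσgh (hσxh j)
  have hc : ∀ (kk : Bool) j, p.contractRight (y j) (if kk then g else 1) = 0 := by
    rintro (_ | _) j <;> simp [p.contractRight_of_comul_eq_tmul_self hcg, hσgy, hey]
  have hd : ∀ (ll : Bool) j, p.contractLeft (x j) (if ll then h else 1) = 0 := by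
    rintro (_ | _) j <;> simp [p.contractLeft_of_comul_eq_tmul_self hch, hσxh, hex]
  have hbase : ∀ kk ll : Bool,
      p.σ (if kk then g else 1) (if ll then h else 1) = if kk ∧ ll then -1 else 1 := by
    rintro (_ | _) (_ | _) <;> simp [p.pair_one_left, p.pair_one_right, heg, heh, hσgh]
  have hpair : ∀ (kk ll : Bool) (S T : Finset (Fin n)),
      p.σ ((if kk then g else 1) * S.orderedProd x) ((if ll then h else 1) * T.orderedProd y)
        = if S = T then (if kk ∧ ll then (-1 : k) else 1) else 0 := fun kk ll S T => by
    rw [← hbase]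
    exact p.pair_mul_orderedProd hx hy hσxy (hc kk) (hd ll) S T
  set J : Matrix Bool Bool k := Matrix.of fun kk ll => if kk ∧ ll then -1 else 1
  have hJ : J.det ≠ 0 := by
    rw [← Matrix.det_reindex_self finTwoEquiv.symm, Matrix.det_fin_two]
    simpa [J, finTwoEquiv, show (-1 : k) - 1 = -2 by ring] using htwo
  have hnd : p.σ.Nondegenerate :=
    LinearMap.nondegenerate_of_pair_basis_eq_kronecker_one bA bB hJ fun ⟨kk, S⟩ ⟨ll, T⟩ => by
      rw [hbA, hbB]
      exact (hpair kk ll S T).trans (by simp [J])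
  exact ⟨hpair, hnd.1, hnd.2⟩

/-- For the Hopf algebra `A_n` (generators `g`, `x i`) and its co-opposite `B_n = A_n^cop`
(generators `h`, `y i`), the Hopf pairing `σ` with `σ(g,h) = -1`, `σ(g,y_j) = σ(x_i,h) = 0`,
`σ(x_i,y_j) = δ_{ij}` satisfies `σ(g^k x_S, h^l y_T) = (-1)^{kl} δ_{S,T}`, and consequently
`σ` is non-degenerate. -/
theorem An_pairing_basis (k : Type) [Field k] (htwo : (2 : k) ≠ 0) (n : ℕ)
    (A B : Type) [Ring A] [HopfAlgebra k A] [Ring B] [HopfAlgebra k B]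
    (g : A) (x : Fin n → A) (h : B) (y : Fin n → B)
    -- relations in A_n
    (hg2 : g * g = 1) (hx2 : ∀ i, x i * x i = 0)
    (hgx : ∀ i, g * x i = -(x i * g)) (hxx : ∀ i j, x i * x j = -(x j * x i))
    (hcg : Coalgebra.comul (R := k) g = g ⊗ₜ[k] g)
    (hcx : ∀ i, Coalgebra.comul (R := k) (x i) = x i ⊗ₜ[k] g + (1 : A) ⊗ₜ[k] x i)
    (heg : Coalgebra.counit (R := k) g = 1) (hex : ∀ i, Coalgebra.counit (R := k) (x i) = 0)
    -- relations in B_n = A_n^cop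
    (hh2 : h * h = 1) (hy2 : ∀ i, y i * y i = 0)
    (hhy : ∀ i, h * y i = -(y i * h)) (hyy : ∀ i j, y i * y j = -(y j * y i))
    (hch : Coalgebra.comul (R := k) h = h ⊗ₜ[k] h)
    (hcy : ∀ i, Coalgebra.comul (R := k) (y i) = y i ⊗ₜ[k] (1 : B) + h ⊗ₜ[k] y i)
    (heh : Coalgebra.counit (R := k) h = 1) (hey : ∀ i, Coalgebra.counit (R := k) (y i) = 0)
    -- the Hopf pairing and its values on generators
    (p : HopfPairing k A B)
    (hσgh : p.σ g h = -1) (hσgy : ∀ j, p.σ g (y j) = 0) (hσxh : ∀ i, p.σ (x i) h = 0)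
    (hσxy : ∀ i j, p.σ (x i) (y j) = if i = j then 1 else 0)
    -- the monomials g^k x_S and h^l y_T form bases
    (bA : Module.Basis (Bool × Finset (Fin n)) k A)
    (hbA : ∀ q : Bool × Finset (Fin n),
      bA q = (if q.1 then g else 1) * ((q.2.sort (· ≤ ·)).map x).prod)
    (bB : Module.Basis (Bool × Finset (Fin n)) k B)
    (hbB : ∀ q : Bool × Finset (Fin n),
      bB q = (if q.1 then h else 1) * ((q.2.sort (· ≤ ·)).map y).prod) :
    (∀ (kk ll : Bool) (S T : Finset (Fin n)),
      p.σ ((if kk then g else 1) * ((S.sort (· ≤ ·)).map x).prod)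
          ((if ll then h else 1) * ((T.sort (· ≤ ·)).map y).prod)
        = if S = T then (if kk ∧ ll then (-1 : k) else 1) else 0) ∧
    (∀ a : A, (∀ b : B, p.σ a b = 0) → a = 0) ∧
    (∀ b : B, (∀ a : A, p.σ a b = 0) → b = 0) :=
  An_pairing_basis_general k htwo n A B g x h y hcg hcx heg hex hch hcy heh hey p hσgh hσgy hσxh
    hσxy bA hbA bB hbB
end
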